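/- arXiv:2007.10612 — 5 statements merged into one kernel-verified Lean document; each statement's English description precedes it below -/
import Mathlib

section
/- Let D = diag(N_1,…,N_R) with N_i ≥ 0 and λ > 0, let M be an R×R orthogonal matrix whose first column is 1/√R, and let Q be M with its first column removed. Then H := Q(QᵀDQ + λI_{R−1})⁻¹Qᵀ equals (D+λI)⁻¹ − (D+λI)⁻¹ 11ᵀ (D+λI)⁻¹ / (1ᵀ(D+λI)⁻¹1). -/
open Matrix

private lemma mul_vecMulVec' {m n p : Type*} [Fintype n] (A : Matrix m n ℝ) (u : n → ℝ)
    (v : p → ℝ) : A * vecMulVec u v = vecMulVec (A *ᵥ u) v := by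
  ext i j
  simp [Matrix.mul_apply, vecMulVec_apply, mulVec, dotProduct, Finset.sum_mul, mul_assoc]

private lemma vecMulVec_mul' {m n p : Type*} [Fintype n] [Fintype p] (u : m → ℝ) (v : n → ℝ)
    (A : Matrix n p ℝ) : vecMulVec u v * A = vecMulVec u (v ᵥ* A) := by
  ext i j
  simp [Matrix.mul_apply, vecMulVec_apply, vecMul, dotProduct, Finset.mul_sum, mul_assoc]

private lemma vecMulVec_mul_vecMulVec' {m n p : Type*} [Fintype n] (u : m → ℝ) (v w : n → ℝ)
    (x : p → ℝ) : vecMulVec u v * vecMulVec w x = (v ⬝ᵥ w) • vecMulVec u x := by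
  ext i j
  simp only [Matrix.mul_apply, vecMulVec_apply, Matrix.smul_apply, dotProduct, smul_eq_mul,
    Finset.sum_mul]
  exact Finset.sum_congr rfl fun k _ => by ring

theorem stmt_5 (n : ℕ) (M : Matrix (Fin (n + 1)) (Fin (n + 1)) ℝ)
    (hM : M ∈ Matrix.orthogonalGroup (Fin (n + 1)) ℝ)
    (hcol : ∀ i, M i 0 = 1 / Real.sqrt (n + 1))
    (Q : Matrix (Fin (n + 1)) (Fin n) ℝ) (hQ : ∀ i j, Q i j = M i j.succ)
    (Nv : Fin (n + 1) → ℝ) (hNv : ∀ i, 0 ≤ Nv i) (lam : ℝ) (hlam : 0 < lam)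
    (D : Matrix (Fin (n + 1)) (Fin (n + 1)) ℝ) (hD : D = Matrix.diagonal Nv)
    (H : Matrix (Fin (n + 1)) (Fin (n + 1)) ℝ)
    (hH : H = Q * (Qᵀ * D * Q + lam • (1 : Matrix (Fin n) (Fin n) ℝ))⁻¹ * Qᵀ)
    (ones : Fin (n + 1) → ℝ) (hones : ones = fun _ => 1) :
    H = (D + lam • 1)⁻¹ -
      (ones ⬝ᵥ ((D + lam • 1)⁻¹ *ᵥ ones))⁻¹ •
        ((D + lam • 1)⁻¹ * Matrix.vecMulVec ones ones * (D + lam • 1)⁻¹) := by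
  subst hD hH
  -- basic orthogonality facts
  have hMtM : Mᵀ * M = 1 := by
    have h := (Matrix.mem_orthogonalGroup_iff' (Fin (n+1)) ℝ).mp hM
    simpa [Matrix.star_eq_conjTranspose, Matrix.conjTranspose] using h
  have hMMt : M * Mᵀ = 1 := by
    have h := (Matrix.mem_orthogonalGroup_iff (Fin (n+1)) ℝ).mp hM
    simpa [Matrix.star_eq_conjTranspose, Matrix.conjTranspose] using h
  have hRpos : (0:ℝ) < (n+1 : ℝ) := by positivity
  -- column sums of Q vanish
  have hcolsum : ∀ j : Fin n, ∑ i, Q i j = 0 := by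
    intro j
    have h := congrFun (congrFun hMtM j.succ) 0
    simp only [Matrix.mul_apply, Matrix.transpose_apply, Matrix.one_apply,
      Fin.succ_ne_zero, if_false] at h
    have h2 : (∑ i, M i j.succ) * (1 / Real.sqrt (n+1)) = 0 := by
      rw [Finset.sum_mul]
      simpa [hcol] using h
    have h3 : (1 / Real.sqrt (n+1)) ≠ 0 := by positivity
    have := mul_eq_zero.mp h2
    simp only [hQ]
    tauto
  have hQtQ : Qᵀ * Q = 1 := by
    ext j k
    have h := congrFun (congrFun hMtM j.succ) k.succ
    simp only [Matrix.mul_apply, Matrix.transpose_apply, Matrix.one_apply,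
      Fin.succ_inj] at h ⊢
    simpa [hQ] using h
  set J : Matrix (Fin (n+1)) (Fin (n+1)) ℝ := vecMulVec ones ones with hJ
  have hQQt : Q * Qᵀ = 1 - ((n+1:ℝ))⁻¹ • J := by
    ext i i'
    have h := congrFun (congrFun hMMt i) i'
    rw [Matrix.mul_apply, Fin.sum_univ_succ] at h
    simp only [Matrix.transpose_apply, Matrix.one_apply] at h
    have hv : M i 0 * M i' 0 = ((n+1:ℝ))⁻¹ := by
      rw [hcol, hcol, div_mul_div_comm, one_mul,
        Real.mul_self_sqrt (by positivity), one_div]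
    rw [hv] at h
    simp only [Matrix.mul_apply, Matrix.transpose_apply, Matrix.sub_apply,
      Matrix.smul_apply, Matrix.one_apply, smul_eq_mul, hJ, vecMulVec_apply, hones,
      mul_one]
    have hq : ∑ j, Q i j * Q i' j = ∑ j : Fin n, M i j.succ * M i' j.succ := by
      simp [hQ]
    rw [hq]
    linarith
  -- the diagonal matrix and its inverse
  set d : Fin (n+1) → ℝ := fun i => Nv i + lam with hd
  have hdpos : ∀ i, 0 < d i := fun i => add_pos_of_nonneg_of_pos (hNv i) hlam
  have hAeq : Matrix.diagonal Nv + lam • (1 : Matrix (Fin (n+1)) (Fin (n+1)) ℝ)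
      = Matrix.diagonal d := by
    rw [Matrix.smul_one_eq_diagonal, Matrix.diagonal_add]
  set A : Matrix (Fin (n+1)) (Fin (n+1)) ℝ := Matrix.diagonal d with hA
  set Ai : Matrix (Fin (n+1)) (Fin (n+1)) ℝ := Matrix.diagonal (fun i => (d i)⁻¹) with hAi
  have hAAi : A * Ai = 1 := by
    rw [hA, hAi, Matrix.diagonal_mul_diagonal,
      show (fun i => d i * (d i)⁻¹) = fun _ : Fin (n+1) => (1:ℝ) from
        funext fun i => mul_inv_cancel₀ (hdpos i).ne', Matrix.diagonal_one]
  have hAiA : Ai * A = 1 := by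
    rw [hAi, hA, Matrix.diagonal_mul_diagonal,
      show (fun i => (d i)⁻¹ * d i) = fun _ : Fin (n+1) => (1:ℝ) from
        funext fun i => inv_mul_cancel₀ (hdpos i).ne', Matrix.diagonal_one]
  have hAinv : A⁻¹ = Ai := Matrix.inv_eq_right_inv hAAi
  -- the scalar s
  set s : ℝ := ∑ i, (d i)⁻¹ with hs
  have hspos : 0 < s := Finset.sum_pos (fun i _ => inv_pos.mpr (hdpos i)) ⟨0, Finset.mem_univ 0⟩
  have hsd : ones ⬝ᵥ (Ai *ᵥ ones) = s := by
    simp [dotProduct, Matrix.mulVec, hAi, hones, hs, Matrix.diagonal_apply]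
  -- J identities
  have hvAi : ones ᵥ* Ai = fun i => (d i)⁻¹ := by
    ext i
    simp [Matrix.vecMul, dotProduct, hAi, hones, Matrix.diagonal_apply]
  have hJAiJ : J * Ai * J = s • J := by
    rw [hJ, vecMulVec_mul', vecMulVec_mul_vecMulVec', hvAi]
    congr 1
    simp [dotProduct, hones, hs]
  have hQtJ : Qᵀ * J = 0 := by
    rw [hJ, mul_vecMulVec']
    have hz : Qᵀ *ᵥ ones = 0 := by
      ext j
      simp [Matrix.mulVec, dotProduct, hones, hcolsum j]
    rw [hz]
    ext i j
    simp [vecMulVec_apply]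
  have hJQ : J * Q = 0 := by
    rw [hJ, vecMulVec_mul']
    have hz : ones ᵥ* Q = 0 := by
      ext j
      simp [Matrix.vecMul, dotProduct, hones, hcolsum j]
    rw [hz]
    ext i j
    simp [vecMulVec_apply]
  -- the matrix K
  set K : Matrix (Fin n) (Fin n) ℝ :=
    Qᵀ * Matrix.diagonal Nv * Q + lam • (1 : Matrix (Fin n) (Fin n) ℝ) with hK
  have hKA : K = Qᵀ * A * Q := by
    have h1 : Qᵀ * A * Q = Qᵀ * Matrix.diagonal Nv * Q + lam • (Qᵀ * Q) := by
      rw [← hAeq, Matrix.mul_add, Matrix.add_mul, Matrix.mul_smul, Matrix.smul_mul,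
        Matrix.mul_one]
    rw [h1, hQtQ, hK]
  have hKpd : K.PosDef := by
    rw [hK]
    apply Matrix.PosDef.posSemidef_add
    · have hDpsd : (Matrix.diagonal Nv).PosSemidef := Matrix.posSemidef_diagonal_iff.mpr hNv
      have := hDpsd.conjTranspose_mul_mul_same Q
      simpa using this
    · rw [Matrix.smul_one_eq_diagonal]
      exact Matrix.posDef_diagonal_iff.mpr fun _ => hlam
  -- the candidate B
  set B : Matrix (Fin (n+1)) (Fin (n+1)) ℝ := Ai - s⁻¹ • (Ai * J * Ai) with hB
  have hBJ : B * J = 0 := by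
    rw [hB, Matrix.sub_mul, Matrix.smul_mul,
      show Ai * J * Ai * J = Ai * (J * Ai * J) by simp only [Matrix.mul_assoc],
      hJAiJ, Matrix.mul_smul, smul_smul, inv_mul_cancel₀ hspos.ne', one_smul, sub_self]
  have hJB : J * B = 0 := by
    rw [hB, Matrix.mul_sub, Matrix.mul_smul,
      show J * (Ai * J * Ai) = (J * Ai * J) * Ai by simp only [Matrix.mul_assoc],
      hJAiJ, Matrix.smul_mul, smul_smul, inv_mul_cancel₀ hspos.ne', one_smul, sub_self]
  have hBA : B * A = 1 - s⁻¹ • (Ai * J) := by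
    rw [hB, Matrix.sub_mul, Matrix.smul_mul, hAiA]
    congr 2
    rw [Matrix.mul_assoc, hAiA, Matrix.mul_one]
  have hQtBQK : (Qᵀ * B * Q) * K = 1 := by
    rw [hKA,
      show (Qᵀ * B * Q) * (Qᵀ * A * Q) = Qᵀ * B * (Q * Qᵀ) * A * Q by simp only [Matrix.mul_assoc],
      hQQt, Matrix.mul_sub, Matrix.mul_one, Matrix.mul_smul,
      Matrix.mul_assoc (Qᵀ) B J, hBJ, Matrix.mul_zero, smul_zero, sub_zero,
      show Qᵀ * B * A * Q = Qᵀ * (B * A) * Q by simp only [Matrix.mul_assoc],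
      hBA, Matrix.mul_sub, Matrix.sub_mul, Matrix.mul_one, hQtQ, Matrix.mul_smul,
      Matrix.smul_mul,
      show Qᵀ * (Ai * J) * Q = Qᵀ * Ai * (J * Q) by simp only [Matrix.mul_assoc],
      hJQ, Matrix.mul_zero, smul_zero, sub_zero]
  have hKinv : K⁻¹ = Qᵀ * B * Q := Matrix.inv_eq_left_inv hQtBQK
  -- conclude
  have hmain : Q * K⁻¹ * Qᵀ = B := by
    rw [hKinv,
      show Q * (Qᵀ * B * Q) * Qᵀ = (Q * Qᵀ) * B * (Q * Qᵀ) by simp only [Matrix.mul_assoc],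
      hQQt, Matrix.sub_mul, Matrix.one_mul, Matrix.smul_mul, hJB, smul_zero, sub_zero,
      Matrix.mul_sub, Matrix.mul_one, Matrix.mul_smul, hBJ, smul_zero, sub_zero]
  rw [hAeq, hAinv, hsd, hmain, hB]
end

section
/- Let Z_{ij} ~ Bernoulli(p_{ij}) independently for i = 1,…,R = S^ρ and j = 1,…,C = S^κ, with S^{1−ρ−κ} ≤ p_{ij} ≤ Υ·S^{1−ρ−κ} where 1 ≤ Υ < ∞, ρ,κ ∈ (0,1), ρ+κ > 1 and 2ρ+κ < 2. Then for every ε > 0, P((1−ε)S^{1−ρ} ≤ min_i N_{i·} ≤ max_i N_{i·} ≤ (Υ+ε)S^{1−ρ}) → 1 as S → ∞, where N_{i·} = ∑_j Z_{ij}. -/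
/-!
Each row count `N_i` is a sum of independent Bernoulli variables whose mean lies between
`S^(1-ρ)` and `(Υ + o(1)) S^(1-ρ)`, because `⌈S^κ⌉ S^(1-ρ-κ) = S^(1-ρ) (1 + O(S^(-κ)))`.
The exponential-moment (Chernoff) bound `E e^(t N_i) ≤ exp ((e^t - 1) E N_i)`, used with a small
`t > 0` for the upper and `-t` for the lower tail, makes both deviations of a row have probability
at most `exp (-c S^(1-ρ))` with `c > 0` depending only on `Υ` and `ε`. A union bound over the
`⌈S^ρ⌉` rows leaves `O(S^ρ exp (-c S^(1-ρ)))`, which tends to `0` as `ρ < 1`.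
-/

open MeasureTheory Filter ProbabilityTheory
open Real Topology

lemma exists_pos_exp_sub_one_mul_lt {a b : ℝ} (hb : 0 ≤ b) (hab : b < a) :
    ∃ t, 0 < t ∧ (exp t - 1) * b < t * a := by
  have ha : 0 < a := hb.trans_lt hab
  set t := (a - b) / (2 * a) with ht_def
  have ht : 0 < t := by positivity
  have ht1 : 0 < 1 - t := by rw [sub_pos, div_lt_one (by positivity)]; linarith
  have hat : 2 * a * t = a - b := by rw [ht_def]; field_simp
  clear_value t
  refine ⟨t, ht, ?_⟩
  have hexp : exp t - 1 ≤ t / (1 - t) := by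
    have h := exp_bound_div_one_sub_of_interval ht.le (sub_pos.1 ht1)
    have h' : 1 / (1 - t) - 1 = t / (1 - t) := by field_simp; ring
    linarith
  calc (exp t - 1) * b ≤ t / (1 - t) * b := by gcongr
    _ < t * a := by
        rw [div_mul_eq_mul_div, div_lt_iff₀ ht1]
        nlinarith

lemma exists_pos_mul_lt_one_sub_exp_neg_mul {a b : ℝ} (hb : 0 < b) (hab : a < b) :
    ∃ t, 0 < t ∧ t * a < (1 - exp (-t)) * b := by
  set t := (b - a) / (2 * b) with ht_def
  have ht : 0 < t := div_pos (by linarith) (by positivity)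
  have hbt : 2 * b * t = b - a := by rw [ht_def]; field_simp
  clear_value t
  refine ⟨t, ht, ?_⟩
  have hexp : t / (1 + t) ≤ 1 - exp (-t) := by
    have h : exp (-t) ≤ 1 / (1 + t) := by
      rw [exp_neg, one_div]
      exact inv_anti₀ (by positivity) (by linarith [add_one_le_exp t])
    have h' : 1 - 1 / (1 + t) = t / (1 + t) := by field_simp; ring
    linarith
  calc t * a < t / (1 + t) * b := by
        rw [div_mul_eq_mul_div, lt_div_iff₀ (by positivity)]
        nlinarith [mul_pos ht (sub_pos.2 hab)]
    _ ≤ (1 - exp (-t)) * b := by gcongr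

namespace ProbabilityTheory

variable {Ω ι : Type*} [MeasurableSpace Ω] {μ : Measure Ω} [Fintype ι] {X : ι → Ω → Bool}

def countTrue (X : ι → Ω → Bool) (ω : Ω) : ℝ := ∑ j, if X j ω then 1 else 0

lemma measurable_ite_bool {Y : Ω → Bool} (hY : Measurable Y) :
    Measurable fun ω => if Y ω then (1 : ℝ) else 0 :=
  (measurable_from_top (f := fun b : Bool => if b then (1 : ℝ) else 0)).comp hY

lemma mgf_ite_bool [IsProbabilityMeasure μ] {Y : Ω → Bool} (hY : Measurable Y) (t : ℝ) :
    mgf (fun ω => if Y ω then (1 : ℝ) else 0) μ t = 1 + (exp t - 1) * μ.real {ω | Y ω = true} := by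
  have hA : MeasurableSet {ω | Y ω = true} := hY (measurableSet_singleton true)
  have hexp : (fun ω => exp (t * if Y ω then (1 : ℝ) else 0))
      = fun ω => 1 + {ω | Y ω = true}.indicator (fun _ => exp t - 1) ω := by
    funext ω
    by_cases h : Y ω <;> simp [h]
  rw [mgf, hexp, integral_add (integrable_const 1) ((integrable_const _).indicator hA),
    integral_indicator_const _ hA]
  simp [mul_comm]

lemma measurable_countTrue (hX : ∀ j, Measurable (X j)) : Measurable (countTrue X) :=
  Finset.measurable_sum _ fun j _ => measurable_ite_bool (hX j)

lemma mgf_countTrue_le [IsProbabilityMeasure μ] (hX : ∀ j, Measurable (X j))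
    (hind : iIndepFun X μ) (t : ℝ) :
    mgf (countTrue X) μ t ≤ exp ((exp t - 1) * ∑ j, μ.real {ω | X j ω = true}) := by
  have hsum : countTrue X = ∑ j, fun ω => if X j ω then (1 : ℝ) else 0 := by
    funext ω; simp [countTrue]
  have hind' : iIndepFun (fun j ω => if X j ω then (1 : ℝ) else 0) μ :=
    hind.comp (fun _ b => if b then (1 : ℝ) else 0) fun _ => measurable_from_top
  rw [hsum, hind'.mgf_sum fun j => measurable_ite_bool (hX j), Finset.mul_sum, exp_sum]
  refine Finset.prod_le_prod (fun _ _ => mgf_nonneg) fun j _ => ?_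
  rw [mgf_ite_bool (hX j)]
  linarith [add_one_le_exp ((exp t - 1) * μ.real {ω | X j ω = true})]

lemma integrable_exp_mul_countTrue [IsFiniteMeasure μ] (hX : ∀ j, Measurable (X j)) (t : ℝ) :
    Integrable (fun ω => exp (t * countTrue X ω)) μ := by
  refine .of_bound ((measurable_countTrue hX).const_mul t).exp.aestronglyMeasurable
    (exp (|t| * Fintype.card ι)) (ae_of_all _ fun ω => ?_)
  have hcount : |countTrue X ω| ≤ Fintype.card ι := by
    rw [abs_of_nonneg (Finset.sum_nonneg fun j _ => by positivity)]
    calc countTrue X ω ≤ ∑ _j : ι, (1 : ℝ) :=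
          Finset.sum_le_sum fun j _ => by split <;> norm_num
      _ = Fintype.card ι := by simp
  rw [norm_eq_abs, abs_exp, exp_le_exp]
  exact (le_abs_self _).trans (by rw [abs_mul]; gcongr)

variable [IsProbabilityMeasure μ]

lemma measureReal_countTrue_ge_le (hX : ∀ j, Measurable (X j)) (hind : iIndepFun X μ)
    {t m : ℝ} (ht : 0 ≤ t) (hm : ∑ j, μ.real {ω | X j ω = true} ≤ m) (a : ℝ) :
    μ.real {ω | a ≤ countTrue X ω} ≤ exp (-t * a + (exp t - 1) * m) := by
  have hexp : 0 ≤ exp t - 1 := by linarith [one_le_exp ht]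
  calc μ.real {ω | a ≤ countTrue X ω}
      ≤ exp (-t * a) * mgf (countTrue X) μ t :=
        measure_ge_le_exp_mul_mgf a ht (integrable_exp_mul_countTrue hX t)
    _ ≤ exp (-t * a) * exp ((exp t - 1) * m) := by
        gcongr
        exact (mgf_countTrue_le hX hind t).trans (exp_le_exp.2 (by gcongr))
    _ = exp (-t * a + (exp t - 1) * m) := (exp_add _ _).symm

lemma measureReal_countTrue_le_le (hX : ∀ j, Measurable (X j)) (hind : iIndepFun X μ)
    {t m : ℝ} (ht : 0 ≤ t) (hm : m ≤ ∑ j, μ.real {ω | X j ω = true}) (a : ℝ) :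
    μ.real {ω | countTrue X ω ≤ a} ≤ exp (t * a - (1 - exp (-t)) * m) := by
  have hexp : 0 ≤ 1 - exp (-t) := by linarith [exp_le_one_iff.2 (neg_nonpos.2 ht)]
  calc μ.real {ω | countTrue X ω ≤ a}
      ≤ exp (-(-t) * a) * mgf (countTrue X) μ (-t) :=
        measure_le_le_exp_mul_mgf a (neg_nonpos.2 ht) (integrable_exp_mul_countTrue hX _)
    _ ≤ exp (t * a) * exp (-(1 - exp (-t)) * m) := by
        rw [neg_neg]
        gcongr
        refine (mgf_countTrue_le hX hind _).trans (exp_le_exp.2 ?_)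
        rw [← neg_sub, neg_mul, neg_mul]
        gcongr
    _ = exp (t * a - (1 - exp (-t)) * m) := by rw [← exp_add]; ring_nf

end ProbabilityTheory

lemma exists_chernoff_rate_countTrue {lo hi Λ : ℝ} (hlo : lo < 1) (hΛ : 0 ≤ Λ)
    (hhi : Λ < hi) :
    ∃ c > 0, ∀ {Ω ι : Type*} [MeasurableSpace Ω] [Fintype ι] {μ : Measure Ω}
      [IsProbabilityMeasure μ] {X : ι → Ω → Bool}, (∀ j, Measurable (X j)) → iIndepFun X μ →
      ∀ {M : ℝ}, 0 ≤ M → M ≤ ∑ j, μ.real {ω | X j ω = true} →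
      ∑ j, μ.real {ω | X j ω = true} ≤ Λ * M →
      μ.real {ω | ¬(lo * M ≤ countTrue X ω ∧ countTrue X ω ≤ hi * M)} ≤ 2 * exp (-c * M) := by
  obtain ⟨t₁, ht₁, hrate₁⟩ := exists_pos_exp_sub_one_mul_lt hΛ hhi
  obtain ⟨t₂, ht₂, hrate₂⟩ := exists_pos_mul_lt_one_sub_exp_neg_mul one_pos hlo
  set c₁ := t₁ * hi - (exp t₁ - 1) * Λ
  set c₂ := (1 - exp (-t₂)) * 1 - t₂ * lo
  refine ⟨min c₁ c₂, lt_min (by linarith) (by linarith), ?_⟩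
  intro Ω ι _ _ μ _ X hX hind M hM hmass_ge hmass_le
  have hc₁ : min c₁ c₂ * M ≤ c₁ * M := mul_le_mul_of_nonneg_right (min_le_left _ _) hM
  have hc₂ : min c₁ c₂ * M ≤ c₂ * M := mul_le_mul_of_nonneg_right (min_le_right _ _) hM
  have hupper := measureReal_countTrue_ge_le hX hind ht₁.le hmass_le (hi * M)
  have hlower := measureReal_countTrue_le_le hX hind ht₂.le hmass_ge (lo * M)
  calc μ.real {ω | ¬(lo * M ≤ countTrue X ω ∧ countTrue X ω ≤ hi * M)}
      ≤ μ.real ({ω | countTrue X ω ≤ lo * M} ∪ {ω | hi * M ≤ countTrue X ω}) := by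
        refine measureReal_mono fun ω hω => ?_
        simp only [Set.mem_ofPred_eq, not_and_or, not_le] at hω
        exact hω.imp le_of_lt le_of_lt
    _ ≤ μ.real {ω | countTrue X ω ≤ lo * M} + μ.real {ω | hi * M ≤ countTrue X ω} :=
        measureReal_union_le _ _
    _ ≤ exp (-min c₁ c₂ * M) + exp (-min c₁ c₂ * M) := by
        gcongr
        · exact hlower.trans (exp_le_exp.2 (by linarith))
        · exact hupper.trans (exp_le_exp.2 (by linarith))
    _ = 2 * exp (-min c₁ c₂ * M) := by ring

lemma measureReal_compl_setOf_forall_le {Ω ι : Type*} [MeasurableSpace Ω] {μ : Measure Ω}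
    [Fintype ι] {p : ι → Ω → Prop} {b : ℝ} (h : ∀ i, μ.real {ω | ¬p i ω} ≤ b) :
    μ.real {ω | ∀ i, p i ω}ᶜ ≤ Fintype.card ι * b := by
  have hcompl : {ω | ∀ i, p i ω}ᶜ = ⋃ i, {ω | ¬p i ω} := by ext; simp
  calc μ.real {ω | ∀ i, p i ω}ᶜ ≤ ∑ i, μ.real {ω | ¬p i ω} := by
        rw [hcompl]; exact measureReal_iUnion_fintype_le _
    _ ≤ Fintype.card ι * b := by
        simpa using Finset.sum_le_sum fun i (_ : i ∈ Finset.univ) => h i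

lemma tendsto_measure_one_of_measureReal_compl_le {α : Type*} {l : Filter α} {Ω : α → Type*}
    [∀ a, MeasurableSpace (Ω a)] {μ : ∀ a, Measure (Ω a)} [∀ a, IsProbabilityMeasure (μ a)]
    {E : ∀ a, Set (Ω a)} {f : α → ℝ} (hf : Tendsto f l (𝓝 0))
    (hE : ∀ᶠ a in l, (μ a).real (E a)ᶜ ≤ f a) :
    Tendsto (fun a => μ a (E a)) l (𝓝 1) := by
  have hreal : Tendsto (fun a => (μ a).real (E a)) l (𝓝 1) := by
    refine tendsto_of_tendsto_of_tendsto_of_le_of_le' (by simpa using hf.const_sub 1)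
      tendsto_const_nhds ?_ (Eventually.of_forall fun a => measureReal_le_one)
    filter_upwards [hE] with a ha
    have hcover := measureReal_union_le (μ := μ a) (E a) (E a)ᶜ
    rw [Set.union_compl_self, probReal_univ] at hcover
    linarith
  simpa [ofReal_measureReal] using ENNReal.tendsto_ofReal hreal

lemma tendsto_rpow_add_one_mul_exp_neg_mul_rpow {ρ c : ℝ} (hρ : ρ < 1) (hc : 0 < c) :
    Tendsto (fun x : ℝ => (x ^ ρ + 1) * exp (-c * x ^ (1 - ρ))) atTop (𝓝 0) := by
  -- substitute `u = x ^ (1 - ρ)`, so that `x ^ ρ = u ^ (ρ / (1 - ρ))`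
  have hdecay : Tendsto (fun u : ℝ => (u ^ (ρ / (1 - ρ)) + 1) * exp (-c * u)) atTop (𝓝 0) := by
    simpa [add_mul] using (tendsto_rpow_mul_exp_neg_mul_atTop_nhds_zero (ρ / (1 - ρ)) c hc).add
      (tendsto_rpow_mul_exp_neg_mul_atTop_nhds_zero 0 c hc)
  refine (hdecay.comp (tendsto_rpow_atTop (sub_pos.2 hρ))).congr' ?_
  filter_upwards [eventually_ge_atTop 0] with x hx
  rw [Function.comp_apply, ← rpow_mul hx, mul_div_cancel₀ _ (sub_pos.2 hρ).ne']

lemma eventually_rpow_le_sum_le {α κ Υ η : ℝ} (hκ : 0 < κ) (hΥ : 0 ≤ Υ) (hη : 0 < η) :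
    ∀ᶠ S : ℕ in atTop, ∀ (n : ℕ) (p : Fin n → ℝ), (S : ℝ) ^ κ ≤ n → (n : ℝ) ≤ (S : ℝ) ^ κ + 1 →
      (∀ j, (S : ℝ) ^ (α - κ) ≤ p j) → (∀ j, p j ≤ Υ * (S : ℝ) ^ (α - κ)) →
      (S : ℝ) ^ α ≤ ∑ j, p j ∧ ∑ j, p j ≤ (Υ + η) * (S : ℝ) ^ α := by
  have hsmall : ∀ᶠ S : ℕ in atTop, Υ * (S : ℝ) ^ (-κ) ≤ η := by
    have h := ((tendsto_rpow_neg_atTop hκ).comp tendsto_natCast_atTop_atTop).const_mul Υ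
    rw [mul_zero] at h
    exact h.eventually (eventually_le_nhds hη)
  filter_upwards [eventually_gt_atTop 0, hsmall] with S hS hsmallS n p hn_ge hn_le hp_ge hp_le
  have hS' : (0 : ℝ) < S := Nat.cast_pos.2 hS
  have hsplit : (S : ℝ) ^ α = (S : ℝ) ^ κ * (S : ℝ) ^ (α - κ) := by
    rw [← rpow_add hS']; ring_nf
  have hsplit' : (S : ℝ) ^ (α - κ) = (S : ℝ) ^ (-κ) * (S : ℝ) ^ α := by
    rw [← rpow_add hS']; ring_nf
  have hq : 0 ≤ (S : ℝ) ^ (α - κ) := by positivity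
  constructor
  · calc (S : ℝ) ^ α = (S : ℝ) ^ κ * (S : ℝ) ^ (α - κ) := hsplit
      _ ≤ n * (S : ℝ) ^ (α - κ) := by gcongr
      _ = ∑ _j : Fin n, (S : ℝ) ^ (α - κ) := by simp
      _ ≤ ∑ j, p j := Finset.sum_le_sum fun j _ => hp_ge j
  · calc ∑ j, p j ≤ ∑ _j : Fin n, Υ * (S : ℝ) ^ (α - κ) := Finset.sum_le_sum fun j _ => hp_le j
      _ = n * (Υ * (S : ℝ) ^ (α - κ)) := by simp
      _ ≤ ((S : ℝ) ^ κ + 1) * (Υ * (S : ℝ) ^ (α - κ)) := by gcongr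
      _ = Υ * (S : ℝ) ^ α + Υ * (S : ℝ) ^ (-κ) * (S : ℝ) ^ α := by
          linear_combination Υ * hsplit.symm + Υ * hsplit'
      _ ≤ (Υ + η) * (S : ℝ) ^ α := by nlinarith [rpow_nonneg hS'.le α]

theorem stmt_12_general (ρ κ Υ : ℝ)
    (hρ : ρ ∈ Set.Ioo (0 : ℝ) 1) (hκ : κ ∈ Set.Ioo (0 : ℝ) 1)
    (hΥ : 1 ≤ Υ)
    (R C : ℕ → ℕ)
    (hR : ∀ S, R S = Nat.ceil ((S : ℝ) ^ ρ)) (hC : ∀ S, C S = Nat.ceil ((S : ℝ) ^ κ))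
    (Ω : ℕ → Type) [∀ S, MeasurableSpace (Ω S)]
    (μ : ∀ S, Measure (Ω S)) [∀ S, IsProbabilityMeasure (μ S)]
    (Z : ∀ S, Fin (R S) → Fin (C S) → Ω S → Bool)
    (hmeas : ∀ (S : ℕ) (i) (j), Measurable (Z S i j))
    (hind : ∀ S, iIndepFun
      (fun (p : Fin (R S) × Fin (C S)) ω => Z S p.1 p.2 ω) (μ S))
    (P : ∀ S, Fin (R S) → Fin (C S) → ℝ)
    (hmarg : ∀ (S : ℕ) (i) (j), μ S {ω | Z S i j ω = true} = ENNReal.ofReal (P S i j))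
    (hPlo : ∀ (S : ℕ) (i) (j), (S : ℝ) ^ (1 - ρ - κ) ≤ P S i j)
    (hPhi : ∀ (S : ℕ) (i) (j), P S i j ≤ Υ * (S : ℝ) ^ (1 - ρ - κ))
    (ε : ℝ) (hε : 0 < ε) :
    Tendsto (fun S => μ S {ω | ∀ i : Fin (R S),
        (1 - ε) * (S : ℝ) ^ (1 - ρ) ≤ (∑ j, if Z S i j ω then (1 : ℝ) else 0) ∧
        (∑ j, if Z S i j ω then (1 : ℝ) else 0) ≤ (Υ + ε) * (S : ℝ) ^ (1 - ρ)})
      atTop (nhds 1) := by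
  obtain ⟨c, hc, hrow⟩ := exists_chernoff_rate_countTrue (lo := 1 - ε) (hi := Υ + ε)
    (Λ := Υ + ε / 2) (by linarith) (by linarith) (by linarith)
  have hreal : ∀ S i j, (μ S).real {ω | Z S i j ω = true} = P S i j := fun S i j => by
    rw [measureReal_def, hmarg,
      ENNReal.toReal_ofReal ((rpow_nonneg S.cast_nonneg _).trans (hPlo S i j))]
  have hlim := ((tendsto_rpow_add_one_mul_exp_neg_mul_rpow hρ.2 hc).comp
    tendsto_natCast_atTop_atTop).const_mul 2
  rw [mul_zero] at hlim
  refine tendsto_measure_one_of_measureReal_compl_le hlim ?_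
  filter_upwards [eventually_rpow_le_sum_le (α := 1 - ρ) (Υ := Υ) hκ.1 (by linarith)
    (half_pos hε)] with S hS
  have hmass : ∀ i, (S : ℝ) ^ (1 - ρ) ≤ ∑ j, (μ S).real {ω | Z S i j ω = true} ∧
      ∑ j, (μ S).real {ω | Z S i j ω = true} ≤ (Υ + ε / 2) * (S : ℝ) ^ (1 - ρ) := fun i => by
    simp only [hreal]
    exact hS (C S) (P S i) (hC S ▸ Nat.le_ceil _) (hC S ▸ (Nat.ceil_lt_add_one (by positivity)).le)
      (hPlo S i) (hPhi S i)
  calc (μ S).real _ ≤ Fintype.card (Fin (R S)) * (2 * exp (-c * (S : ℝ) ^ (1 - ρ))) :=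
        measureReal_compl_setOf_forall_le fun i => hrow (hmeas S i)
          ((hind S).precomp (g := fun j => (i, j)) (Prod.mk_right_injective i)) (by positivity)
          (hmass i).1 (hmass i).2
    _ ≤ 2 * (((S : ℝ) ^ ρ + 1) * exp (-c * (S : ℝ) ^ (1 - ρ))) := by
        rw [Fintype.card_fin, mul_left_comm]
        gcongr
        exact hR S ▸ (Nat.ceil_lt_add_one (by positivity)).le

theorem stmt_12 (ρ κ Υ : ℝ)
    (hρ : ρ ∈ Set.Ioo (0 : ℝ) 1) (hκ : κ ∈ Set.Ioo (0 : ℝ) 1)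
    (hsum : 1 < ρ + κ) (h2 : 2 * ρ + κ < 2) (hΥ : 1 ≤ Υ)
    (R C : ℕ → ℕ)
    (hR : ∀ S, R S = Nat.ceil ((S : ℝ) ^ ρ)) (hC : ∀ S, C S = Nat.ceil ((S : ℝ) ^ κ))
    (Ω : ℕ → Type) [∀ S, MeasurableSpace (Ω S)]
    (μ : ∀ S, Measure (Ω S)) [∀ S, IsProbabilityMeasure (μ S)]
    (Z : ∀ S, Fin (R S) → Fin (C S) → Ω S → Bool)
    (hmeas : ∀ (S : ℕ) (i) (j), Measurable (Z S i j))
    (hind : ∀ S, iIndepFun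
      (fun (p : Fin (R S) × Fin (C S)) ω => Z S p.1 p.2 ω) (μ S))
    (P : ∀ S, Fin (R S) → Fin (C S) → ℝ)
    (hmarg : ∀ (S : ℕ) (i) (j), μ S {ω | Z S i j ω = true} = ENNReal.ofReal (P S i j))
    (hPlo : ∀ (S : ℕ) (i) (j), (S : ℝ) ^ (1 - ρ - κ) ≤ P S i j)
    (hPhi : ∀ (S : ℕ) (i) (j), P S i j ≤ Υ * (S : ℝ) ^ (1 - ρ - κ))
    (ε : ℝ) (hε : 0 < ε) :
    Tendsto (fun S => μ S {ω | ∀ i : Fin (R S),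
        (1 - ε) * (S : ℝ) ^ (1 - ρ) ≤ (∑ j, if Z S i j ω then (1 : ℝ) else 0) ∧
        (∑ j, if Z S i j ω then (1 : ℝ) else 0) ≤ (Υ + ε) * (S : ℝ) ^ (1 - ρ)})
      atTop (nhds 1) :=
  stmt_12_general ρ κ Υ hρ hκ hΥ R C hR hC Ω μ Z hmeas hind P hmarg hPlo hPhi ε hε
end

section
/- Under the same Bernoulli sampling model with ρ,κ ∈ (0,1), ρ+κ > 1 and 3ρ+4κ < 4, for every ε > 0, P(max_{s} max_{j≠s} (ZᵀZ)_{sj} ≤ (Υ²+ε)S^{2−ρ−2κ}) → 1 and P(min_s min_{j≠s} (ZᵀZ)_{sj} ≥ (1−ε)S^{2−ρ−2κ}) → 1 as S → ∞. -/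
/-!
For columns `j ≠ s` the count `(ZᵀZ)_{sj}` is a sum over the `R` rows of the independent
`[0, 1]`-valued variables `Z_{ij} Z_{is}`, whose means `p_{ij} p_{is}` add up to between
`S^{2-ρ-2κ}` and `(Υ² + o(1)) S^{2-ρ-2κ}`, since `R / S^ρ → 1`. By Hoeffding's inequality a
deviation of `δ S^{2-ρ-2κ}` has probability at most `exp (-2 δ² S^{4-2ρ-4κ} / R)`, which is
`≤ exp (-δ² S^{4-3ρ-4κ})`. The union bound over the `C² ≤ 4 S^{2κ}` pairs costs a polynomial
factor only, which the exponential beats because `3ρ + 4κ < 4`.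
-/

open MeasureTheory Filter ProbabilityTheory Real Topology

namespace ProbabilityTheory

variable {Ω : Type*} [MeasurableSpace Ω] {μ : Measure Ω}

/-- The converse of `iIndepFun_uncurry'`: the rows of an independent array are independent. -/
lemma iIndepFun.curry {ι κ 𝓧 : Type*} [MeasurableSpace 𝓧] {X : ι → κ → Ω → 𝓧}
    (mX : ∀ i j, Measurable (X i j)) (h : iIndepFun (fun (p : ι × κ) ω ↦ X p.1 p.2 ω) μ) :
    iIndepFun (fun i ω ↦ (X i · ω)) μ := by
  have := h.isProbabilityMeasure
  have (i : ι) (j : κ) := Measure.isProbabilityMeasure_map (μ := μ) (mX i j).aemeasurable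
  have hrow (i : ι) : μ.map (fun ω j ↦ X i j ω) = Measure.infinitePi fun j ↦ μ.map (X i j) :=
    (h.precomp (Prod.mk_right_injective i)).map_fun_eq_infinitePi_map fun j ↦ mX i j
  rw [iIndepFun_iff_map_fun_eq_infinitePi_map (by fun_prop)]
  calc μ.map (fun ω i j ↦ X i j ω)
      = (μ.map fun ω (p : ι × κ) ↦ X p.1 p.2 ω).map (MeasurableEquiv.curry ι κ 𝓧) := by
        rw [Measure.map_map (by fun_prop) (by fun_prop)]; rfl
    _ = Measure.infinitePi fun i ↦ μ.map (fun ω j ↦ X i j ω) := by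
        rw [h.map_fun_eq_infinitePi_map fun p : ι × κ ↦ mX p.1 p.2,
          Measure.infinitePi_map_curry fun i j ↦ μ.map (X i j)]
        simp_rw [hrow]

section Hoeffding

variable {ι : Type*}

lemma hasSubgaussianMGF_sub_integral_of_mem_unitInterval [IsProbabilityMeasure μ] {Y : Ω → ℝ}
    (hY : Measurable Y) (hY01 : ∀ ω, Y ω ∈ Set.Icc (0 : ℝ) 1) :
    HasSubgaussianMGF (fun ω ↦ Y ω - μ[Y]) (1 / 4) μ := by
  convert hasSubgaussianMGF_of_mem_Icc (μ := μ) hY.aemeasurable (ae_of_all _ hY01) using 1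
  ext
  simp only [one_div, NNReal.coe_inv, NNReal.coe_ofNat, sub_zero, nnnorm_one, inv_pow,
    NNReal.coe_pow, inv_inj]
  norm_num

lemma measureReal_le_sum_le_of_hasSubgaussianMGF_quarter {Y : ι → Ω → ℝ} (hind : iIndepFun Y μ)
    (hY : ∀ i, HasSubgaussianMGF (Y i) (1 / 4) μ) (s : Finset ι) {t : ℝ} (ht : 0 ≤ t) :
    μ.real {ω | t ≤ ∑ i ∈ s, Y i ω} ≤ exp (-2 * t ^ 2 / s.card) := by
  refine (HasSubgaussianMGF.measure_sum_ge_le_of_iIndepFun hind (fun i _ ↦ hY i) ht).trans_eq ?_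
  congr 1
  push_cast
  simp only [Finset.sum_const, nsmul_eq_mul]
  ring

variable [IsProbabilityMeasure μ] {X : ι → Ω → ℝ}

lemma measureReal_le_sum_sub_integral_le (hind : iIndepFun X μ) (hX : ∀ i, Measurable (X i))
    (hX01 : ∀ i ω, X i ω ∈ Set.Icc (0 : ℝ) 1) (s : Finset ι) {t : ℝ} (ht : 0 ≤ t) :
    μ.real {ω | t ≤ ∑ i ∈ s, (X i ω - μ[X i])} ≤ exp (-2 * t ^ 2 / s.card) := by
  have hcent : iIndepFun (fun i ω ↦ X i ω - μ[X i]) μ := by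
    have h := hind.comp (fun i (x : ℝ) ↦ x - μ[X i]) fun _ ↦ measurable_id.sub_const _
    exact h
  exact measureReal_le_sum_le_of_hasSubgaussianMGF_quarter hcent
    (fun i ↦ hasSubgaussianMGF_sub_integral_of_mem_unitInterval (hX i) (hX01 i)) s ht

lemma measureReal_sum_sub_integral_le_neg_le (hind : iIndepFun X μ) (hX : ∀ i, Measurable (X i))
    (hX01 : ∀ i ω, X i ω ∈ Set.Icc (0 : ℝ) 1) (s : Finset ι) {t : ℝ} (ht : 0 ≤ t) :
    μ.real {ω | ∑ i ∈ s, (X i ω - μ[X i]) ≤ -t} ≤ exp (-2 * t ^ 2 / s.card) := by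
  have hcent : iIndepFun (fun i ω ↦ -(X i ω - μ[X i])) μ := by
    have h := hind.comp (fun i (x : ℝ) ↦ -(x - μ[X i])) fun _ ↦ (measurable_id.sub_const _).neg
    exact h
  have hneg := measureReal_le_sum_le_of_hasSubgaussianMGF_quarter hcent
    (fun i ↦ (hasSubgaussianMGF_sub_integral_of_mem_unitInterval (hX i) (hX01 i)).neg) s ht
  simpa only [Finset.sum_neg_distrib, le_neg] using hneg

end Hoeffding

end ProbabilityTheory

section CoObservation

variable {Ω ι κ : Type*} [MeasurableSpace Ω] {μ : Measure Ω}

lemma measurable_ite_one_zero {b : Ω → Bool} (hb : Measurable b) :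
    Measurable fun ω ↦ if b ω then (1 : ℝ) else 0 :=
  (Measurable.of_discrete (f := fun x : Bool ↦ if x then (1 : ℝ) else 0)).comp hb

lemma integral_ite_one_zero [IsFiniteMeasure μ] {b : Ω → Bool} (hb : Measurable b) :
    ∫ ω, (if b ω then (1 : ℝ) else 0) ∂μ = μ.real {ω | b ω} := by
  rw [← integral_indicator_one (μ := μ) (s := {ω | b ω}) (hb (measurableSet_singleton true))]
  congr 1 with ω
  by_cases h : b ω <;> simp [h]

lemma ite_mul_ite_mem_unitInterval (a b : Bool) :
    (if a then (1 : ℝ) else 0) * (if b then (1 : ℝ) else 0) ∈ Set.Icc (0 : ℝ) 1 := by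
  cases a <;> cases b <;> norm_num

/-- The entry `(ZᵀZ)_{sj}` of the co-observation matrix of the `0/1` matrix `Z`. -/
def coObservation [Fintype ι] (Z : ι → κ → Ω → Bool) (j s : κ) (ω : Ω) : ℝ :=
  ∑ i, (if Z i j ω then (1 : ℝ) else 0) * (if Z i s ω then (1 : ℝ) else 0)

variable {Z : ι → κ → Ω → Bool}

lemma measurable_coObservation_term (hZ : ∀ i j, Measurable (Z i j)) (i : ι) (j s : κ) :
    Measurable fun ω ↦ (if Z i j ω then (1 : ℝ) else 0) * (if Z i s ω then (1 : ℝ) else 0) :=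
  (measurable_ite_one_zero (hZ i j)).mul (measurable_ite_one_zero (hZ i s))

lemma iIndepFun_coObservation_terms (hZ : ∀ i j, Measurable (Z i j))
    (hind : iIndepFun (fun (p : ι × κ) ω ↦ Z p.1 p.2 ω) μ) (j s : κ) :
    iIndepFun (fun i ω ↦ (if Z i j ω then (1 : ℝ) else 0) * (if Z i s ω then (1 : ℝ) else 0))
      μ := by
  have h := (hind.curry hZ).comp
    (fun _ (x : κ → Bool) ↦ (if x j then (1 : ℝ) else 0) * (if x s then (1 : ℝ) else 0))
    fun _ ↦ (measurable_ite_one_zero (measurable_pi_apply j)).mul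
      (measurable_ite_one_zero (measurable_pi_apply s))
  exact h

lemma integral_coObservation_term (hZ : ∀ i j, Measurable (Z i j))
    (hind : iIndepFun (fun (p : ι × κ) ω ↦ Z p.1 p.2 ω) μ) {j s : κ} (hjs : j ≠ s) (i : ι) :
    ∫ ω, (if Z i j ω then (1 : ℝ) else 0) * (if Z i s ω then (1 : ℝ) else 0) ∂μ
      = μ.real {ω | Z i j ω} * μ.real {ω | Z i s ω} := by
  have := hind.isProbabilityMeasure
  have hpair : Z i j ⟂ᵢ[μ] Z i s := hind.indepFun (i := (i, j)) (j := (i, s)) (by simpa)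
  rw [hpair.integral_fun_comp_mul_comp (f := fun b ↦ if b then (1 : ℝ) else 0)
    (g := fun b ↦ if b then (1 : ℝ) else 0) (hZ i j).aemeasurable (hZ i s).aemeasurable
    (by fun_prop) (by fun_prop), integral_ite_one_zero (hZ i j), integral_ite_one_zero (hZ i s)]

lemma coObservation_sub_eq_sum [Fintype ι] (hZ : ∀ i j, Measurable (Z i j))
    (hind : iIndepFun (fun (p : ι × κ) ω ↦ Z p.1 p.2 ω) μ) {j s : κ} (hjs : j ≠ s) (ω : Ω) :
    coObservation Z j s ω - ∑ i, μ.real {ω | Z i j ω} * μ.real {ω | Z i s ω}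
      = ∑ i, ((if Z i j ω then (1 : ℝ) else 0) * (if Z i s ω then (1 : ℝ) else 0)
          - ∫ ω, (if Z i j ω then (1 : ℝ) else 0) * (if Z i s ω then (1 : ℝ) else 0) ∂μ) := by
  simp only [coObservation, integral_coObservation_term hZ hind hjs, Finset.sum_sub_distrib]

lemma measureReal_add_le_coObservation_le [Fintype ι] (hZ : ∀ i j, Measurable (Z i j))
    (hind : iIndepFun (fun (p : ι × κ) ω ↦ Z p.1 p.2 ω) μ) {j s : κ} (hjs : j ≠ s) {t : ℝ}
    (ht : 0 ≤ t) :
    μ.real {ω | ∑ i, μ.real {ω | Z i j ω} * μ.real {ω | Z i s ω} + t ≤ coObservation Z j s ω}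
      ≤ exp (-2 * t ^ 2 / Fintype.card ι) := by
  have := hind.isProbabilityMeasure
  simp_rw [← le_sub_iff_add_le', coObservation_sub_eq_sum hZ hind hjs]
  exact measureReal_le_sum_sub_integral_le (iIndepFun_coObservation_terms hZ hind j s)
    (fun i ↦ measurable_coObservation_term hZ i j s) (fun _ _ ↦ ite_mul_ite_mem_unitInterval ..) _ ht

lemma measureReal_coObservation_le_sub_le [Fintype ι] (hZ : ∀ i j, Measurable (Z i j))
    (hind : iIndepFun (fun (p : ι × κ) ω ↦ Z p.1 p.2 ω) μ) {j s : κ} (hjs : j ≠ s) {t : ℝ}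
    (ht : 0 ≤ t) :
    μ.real {ω | coObservation Z j s ω ≤ ∑ i, μ.real {ω | Z i j ω} * μ.real {ω | Z i s ω} - t}
      ≤ exp (-2 * t ^ 2 / Fintype.card ι) := by
  have := hind.isProbabilityMeasure
  have hset : {ω | coObservation Z j s ω ≤ ∑ i, μ.real {ω | Z i j ω} * μ.real {ω | Z i s ω} - t}
      = {ω | coObservation Z j s ω - ∑ i, μ.real {ω | Z i j ω} * μ.real {ω | Z i s ω} ≤ -t} := by
    ext; simp only [Set.mem_ofPred_eq]; constructor <;> intro <;> linarith
  rw [hset]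
  simp_rw [coObservation_sub_eq_sum hZ hind hjs]
  exact measureReal_sum_sub_integral_le_neg_le (iIndepFun_coObservation_terms hZ hind j s)
    (fun i ↦ measurable_coObservation_term hZ i j s) (fun _ _ ↦ ite_mul_ite_mem_unitInterval ..) _ ht

end CoObservation

section UnionBound

variable {Ω κ : Type*} [MeasurableSpace Ω] {μ : Measure Ω}

lemma measure_compl_forall_ne_le [IsFiniteMeasure μ] [Fintype κ] {good : κ → κ → Ω → Prop}
    {b : ℝ} (h : ∀ s j, j ≠ s → μ.real {ω | ¬ good s j ω} ≤ b) :
    μ {ω | ∀ s j, j ≠ s → good s j ω}ᶜ ≤ ENNReal.ofReal (Fintype.card κ ^ 2 * b) := by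
  let bad (p : κ × κ) : Set Ω := {ω | p.2 ≠ p.1 ∧ ¬ good p.1 p.2 ω}
  have hcover : {ω | ∀ s j, j ≠ s → good s j ω}ᶜ ⊆ ⋃ p, bad p := by
    intro ω hω
    simp only [Set.mem_compl_iff, Set.mem_ofPred_eq, not_forall] at hω
    obtain ⟨s, j, hjs, hω⟩ := hω
    exact Set.mem_iUnion.2 ⟨(s, j), hjs, hω⟩
  have hbad (p : κ × κ) : μ (bad p) ≤ ENNReal.ofReal b := by
    by_cases hp : p.2 = p.1
    · simp [bad, hp]
    · rw [← ofReal_measureReal]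
      exact ENNReal.ofReal_le_ofReal ((measureReal_mono fun ω hω ↦ hω.2).trans (h _ _ hp))
  calc μ {ω | ∀ s j, j ≠ s → good s j ω}ᶜ ≤ ∑ p, μ (bad p) :=
        (measure_mono hcover).trans (measure_iUnion_fintype_le μ bad)
    _ ≤ ∑ _p : κ × κ, ENNReal.ofReal b := Finset.sum_le_sum fun p _ ↦ hbad p
    _ = ENNReal.ofReal (Fintype.card κ ^ 2 * b) := by
        rw [Finset.sum_const, ENNReal.ofReal_mul (by positivity), nsmul_eq_mul]
        simp [sq]

end UnionBound

lemma tendsto_measure_of_measure_compl_le {ι : Type*} {l : Filter ι} {Ω : ι → Type*}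
    [∀ n, MeasurableSpace (Ω n)] {μ : ∀ n, Measure (Ω n)} [∀ n, IsProbabilityMeasure (μ n)]
    {G : ∀ n, Set (Ω n)} {c : ι → ℝ} (hc : Tendsto c l (𝓝 0))
    (h : ∀ᶠ n in l, μ n (G n)ᶜ ≤ ENNReal.ofReal (c n)) :
    Tendsto (fun n ↦ μ n (G n)) l (𝓝 1) := by
  have hcompl : Tendsto (fun n ↦ μ n (G n)ᶜ) l (𝓝 0) :=
    tendsto_of_tendsto_of_tendsto_of_le_of_le' tendsto_const_nhds
      (by simpa using ENNReal.tendsto_ofReal hc) (.of_forall fun _ ↦ zero_le) h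
  have hlower : Tendsto (fun n ↦ 1 - μ n (G n)ᶜ) l (𝓝 1) := by
    simpa using ENNReal.Tendsto.sub tendsto_const_nhds hcompl (.inl ENNReal.one_ne_top)
  refine tendsto_of_tendsto_of_tendsto_of_le_of_le hlower tendsto_const_nhds (fun n ↦ ?_)
    fun n ↦ prob_le_one
  rw [tsub_le_iff_right, ← measure_univ (μ := μ n), ← Set.union_compl_self (G n)]
  exact measure_union_le _ _

lemma tendsto_measure_forall_ne_of_measureReal_le {ι : Type*} {l : Filter ι} {Ω : ι → Type*}
    [∀ n, MeasurableSpace (Ω n)] {μ : ∀ n, Measure (Ω n)} [∀ n, IsProbabilityMeasure (μ n)]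
    {κ : ι → Type*} [∀ n, Fintype (κ n)] {good : ∀ n, κ n → κ n → Ω n → Prop} {b : ι → ℝ}
    (hb : Tendsto (fun n ↦ (Fintype.card (κ n) : ℝ) ^ 2 * b n) l (𝓝 0))
    (h : ∀ᶠ n in l, ∀ s j, j ≠ s → (μ n).real {ω | ¬ good n s j ω} ≤ b n) :
    Tendsto (fun n ↦ μ n {ω | ∀ s j, j ≠ s → good n s j ω}) l (𝓝 1) :=
  tendsto_measure_of_measure_compl_le hb (h.mono fun _ hn ↦ measure_compl_forall_ne_le hn)

lemma tendsto_rpow_mul_exp_neg_mul_rpow_atTop_nhds_zero (s : ℝ) {a b : ℝ} (ha : 0 < a)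
    (hb : 0 < b) : Tendsto (fun x : ℝ ↦ x ^ s * exp (-b * x ^ a)) atTop (𝓝 0) := by
  refine ((tendsto_rpow_mul_exp_neg_mul_atTop_nhds_zero (s / a) b hb).comp
    (tendsto_rpow_atTop ha)).congr' ?_
  filter_upwards [eventually_gt_atTop 0] with x hx
  simp only [Function.comp_apply, ← rpow_mul hx.le, mul_div_cancel₀ s ha.ne']

lemma natCeil_le_two_mul {x : ℝ} (hx : 1 ≤ x) : (⌈x⌉₊ : ℝ) ≤ 2 * x := by
  linarith [Nat.ceil_lt_add_one (zero_le_one.trans hx)]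

lemma tendsto_natCeil_rpow_sq_mul_exp_neg {ρ κ δ : ℝ} (hρ : 0 < ρ) (hκ : 0 ≤ κ)
    (h34 : 3 * ρ + 4 * κ < 4) (hδ : 0 < δ) :
    Tendsto (fun S : ℕ ↦ (⌈(S : ℝ) ^ κ⌉₊ : ℝ) ^ 2 *
      exp (-2 * (δ * (S : ℝ) ^ (2 - ρ - 2 * κ)) ^ 2 / ⌈(S : ℝ) ^ ρ⌉₊)) atTop (𝓝 0) := by
  have hlim := ((tendsto_rpow_mul_exp_neg_mul_rpow_atTop_nhds_zero (2 * κ)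
    (by linarith : (0 : ℝ) < 4 - 3 * ρ - 4 * κ) (by positivity : 0 < δ ^ 2)).comp
    tendsto_natCast_atTop_atTop).const_mul 4
  rw [mul_zero] at hlim
  refine squeeze_zero' (.of_forall fun _ ↦ by positivity) ?_ hlim
  filter_upwards [eventually_ge_atTop 1] with S hS
  have hx : (1 : ℝ) ≤ S := by exact_mod_cast hS
  have hx0 : (0 : ℝ) < S := by linarith
  have hρ1 : 1 ≤ (S : ℝ) ^ ρ := one_le_rpow hx hρ.le
  have hR0 : (0 : ℝ) < ⌈(S : ℝ) ^ ρ⌉₊ := by positivity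
  have hcard : (⌈(S : ℝ) ^ κ⌉₊ : ℝ) ^ 2 ≤ 4 * (S : ℝ) ^ (2 * κ) := by
    have := natCeil_le_two_mul (one_le_rpow hx hκ)
    calc (⌈(S : ℝ) ^ κ⌉₊ : ℝ) ^ 2 ≤ (2 * (S : ℝ) ^ κ) ^ 2 := by gcongr
      _ = 4 * (S : ℝ) ^ (2 * κ) := by
        rw [show 2 * κ = κ * (2 : ℕ) by push_cast; ring, rpow_mul_natCast hx0.le]; ring
  have hexp : -2 * (δ * (S : ℝ) ^ (2 - ρ - 2 * κ)) ^ 2 / ⌈(S : ℝ) ^ ρ⌉₊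
      ≤ -δ ^ 2 * (S : ℝ) ^ (4 - 3 * ρ - 4 * κ) := by
    have hsq : ((S : ℝ) ^ (2 - ρ - 2 * κ)) ^ 2 = (S : ℝ) ^ ρ * (S : ℝ) ^ (4 - 3 * ρ - 4 * κ) := by
      rw [← rpow_natCast, ← rpow_mul hx0.le, ← rpow_add hx0]; ring_nf
    rw [div_le_iff₀ hR0, mul_pow, hsq]
    have := natCeil_le_two_mul hρ1
    nlinarith [mul_nonneg (mul_nonneg (sq_nonneg δ) (rpow_pos_of_pos hx0 (4 - 3 * ρ - 4 * κ)).le)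
      (sub_nonneg.2 this)]
  calc (⌈(S : ℝ) ^ κ⌉₊ : ℝ) ^ 2 * exp (-2 * (δ * (S : ℝ) ^ (2 - ρ - 2 * κ)) ^ 2 / ⌈(S : ℝ) ^ ρ⌉₊)
      ≤ 4 * (S : ℝ) ^ (2 * κ) * exp (-δ ^ 2 * (S : ℝ) ^ (4 - 3 * ρ - 4 * κ)) := by
        gcongr
    _ = _ := by simp only [Function.comp_apply]; ring

lemma eventually_sum_mul_mem_Icc {ρ κ Υ ε : ℝ} (hρ : 0 < ρ) (hε : 0 < ε) {R C : ℕ → ℕ}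
    (hR : ∀ S, R S = ⌈(S : ℝ) ^ ρ⌉₊) (P : ∀ S, Fin (R S) → Fin (C S) → ℝ)
    (hPlo : ∀ (S : ℕ) i j, (S : ℝ) ^ (1 - ρ - κ) ≤ P S i j)
    (hPhi : ∀ (S : ℕ) i j, P S i j ≤ Υ * (S : ℝ) ^ (1 - ρ - κ)) :
    ∀ᶠ S : ℕ in atTop, ∀ j s, ∑ i, P S i j * P S i s ∈
      Set.Icc ((S : ℝ) ^ (2 - ρ - 2 * κ)) ((Υ ^ 2 + ε) * (S : ℝ) ^ (2 - ρ - 2 * κ)) := by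
  have hratio : Tendsto (fun S : ℕ ↦ (R S : ℝ) / (S : ℝ) ^ ρ) atTop (𝓝 1) := by
    simp_rw [hR]
    exact tendsto_nat_ceil_div_atTop.comp ((tendsto_rpow_atTop hρ).comp tendsto_natCast_atTop_atTop)
  have hlt : ∀ᶠ S : ℕ in atTop, Υ ^ 2 * ((R S : ℝ) / (S : ℝ) ^ ρ) < Υ ^ 2 + ε :=
    (hratio.const_mul _).eventually (gt_mem_nhds (by linarith))
  filter_upwards [hlt, eventually_gt_atTop 0] with S hlt hS j s
  have hx0 : (0 : ℝ) < S := by exact_mod_cast hS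
  set L := (S : ℝ) ^ (1 - ρ - κ)
  have hL : 0 ≤ L := by positivity
  have hm : (S : ℝ) ^ (2 - ρ - 2 * κ) = (S : ℝ) ^ ρ * L ^ 2 := by
    rw [← rpow_natCast, ← rpow_mul hx0.le, ← rpow_add hx0]; ring_nf
  have hRρ : (S : ℝ) ^ ρ ≤ R S := hR S ▸ Nat.le_ceil _
  constructor
  · calc (S : ℝ) ^ (2 - ρ - 2 * κ) ≤ R S * L ^ 2 := by rw [hm]; gcongr
      _ = ∑ _i : Fin (R S), L * L := by simp [sq]
      _ ≤ ∑ i, P S i j * P S i s := Finset.sum_le_sum fun i _ ↦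
          mul_le_mul (hPlo S i j) (hPlo S i s) hL (hL.trans (hPlo S i j))
  · calc ∑ i, P S i j * P S i s ≤ ∑ _i : Fin (R S), (Υ * L) * (Υ * L) :=
          Finset.sum_le_sum fun i _ ↦ mul_le_mul (hPhi S i j) (hPhi S i s)
            (hL.trans (hPlo S i s)) ((hL.trans (hPlo S i j)).trans (hPhi S i j))
      _ = Υ ^ 2 * ((R S : ℝ) / (S : ℝ) ^ ρ) * (S : ℝ) ^ (2 - ρ - 2 * κ) := by
          rw [hm, Finset.sum_const, Finset.card_univ, Fintype.card_fin, nsmul_eq_mul]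
          field_simp
      _ ≤ (Υ ^ 2 + ε) * (S : ℝ) ^ (2 - ρ - 2 * κ) := by gcongr

theorem stmt_13_general (ρ κ Υ : ℝ)
    (hρ : ρ ∈ Set.Ioo (0 : ℝ) 1) (hκ : κ ∈ Set.Ioo (0 : ℝ) 1)
    (h34 : 3 * ρ + 4 * κ < 4)
    (R C : ℕ → ℕ)
    (hR : ∀ S, R S = Nat.ceil ((S : ℝ) ^ ρ)) (hC : ∀ S, C S = Nat.ceil ((S : ℝ) ^ κ))
    (Ω : ℕ → Type) [∀ S, MeasurableSpace (Ω S)]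
    (μ : ∀ S, Measure (Ω S)) [∀ S, IsProbabilityMeasure (μ S)]
    (Z : ∀ S, Fin (R S) → Fin (C S) → Ω S → Bool)
    (hmeas : ∀ (S : ℕ) (i) (j), Measurable (Z S i j))
    (hind : ∀ S, iIndepFun
      (fun (p : Fin (R S) × Fin (C S)) ω => Z S p.1 p.2 ω) (μ S))
    (P : ∀ S, Fin (R S) → Fin (C S) → ℝ)
    (hmarg : ∀ (S : ℕ) (i) (j), μ S {ω | Z S i j ω = true} = ENNReal.ofReal (P S i j))
    (hPlo : ∀ (S : ℕ) (i) (j), (S : ℝ) ^ (1 - ρ - κ) ≤ P S i j)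
    (hPhi : ∀ (S : ℕ) (i) (j), P S i j ≤ Υ * (S : ℝ) ^ (1 - ρ - κ))
    (ε : ℝ) (hε : 0 < ε) :
    Tendsto (fun S => μ S {ω | ∀ s : Fin (C S), ∀ j : Fin (C S), j ≠ s →
        (∑ i, (if Z S i j ω then (1 : ℝ) else 0) * (if Z S i s ω then (1 : ℝ) else 0))
          ≤ (Υ ^ 2 + ε) * (S : ℝ) ^ (2 - ρ - 2 * κ)})
      atTop (nhds 1) ∧
    Tendsto (fun S => μ S {ω | ∀ s : Fin (C S), ∀ j : Fin (C S), j ≠ s →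
        (1 - ε) * (S : ℝ) ^ (2 - ρ - 2 * κ) ≤
          ∑ i, (if Z S i j ω then (1 : ℝ) else 0) * (if Z S i s ω then (1 : ℝ) else 0)})
      atTop (nhds 1) := by
  obtain ⟨hρ, -⟩ := hρ
  obtain ⟨hκ, -⟩ := hκ
  have hmean (S : ℕ) (j s : Fin (C S)) :
      ∑ i, (μ S).real {ω | Z S i j ω} * (μ S).real {ω | Z S i s ω} = ∑ i, P S i j * P S i s := by
    simp only [measureReal_def, hmarg,
      ENNReal.toReal_ofReal ((rpow_nonneg (Nat.cast_nonneg S) _).trans (hPlo S _ _))]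
  have hdecay {δ : ℝ} (hδ : 0 < δ) : Tendsto (fun S ↦ (Fintype.card (Fin (C S)) : ℝ) ^ 2 *
      exp (-2 * (δ * (S : ℝ) ^ (2 - ρ - 2 * κ)) ^ 2 / Fintype.card (Fin (R S)))) atTop (𝓝 0) := by
    simpa only [Fintype.card_fin, hR, hC] using tendsto_natCeil_rpow_sq_mul_exp_neg hρ hκ.le h34 hδ
  have hIcc := eventually_sum_mul_mem_Icc hρ (half_pos hε) hR P hPlo hPhi
  constructor
  · refine tendsto_measure_forall_ne_of_measureReal_le (hdecay (half_pos hε)) ?_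
    filter_upwards [hIcc] with S hS s j hjs
    refine (measureReal_mono fun ω hω ↦ ?_).trans
      (measureReal_add_le_coObservation_le (hmeas S) (hind S) hjs (by positivity))
    rw [Set.mem_ofPred_eq, hmean]
    have := (hS j s).2
    simp only [Set.mem_ofPred_eq, not_le] at hω
    unfold coObservation
    linarith
  · refine tendsto_measure_forall_ne_of_measureReal_le (hdecay hε) ?_
    filter_upwards [hIcc] with S hS s j hjs
    refine (measureReal_mono fun ω hω ↦ ?_).trans
      (measureReal_coObservation_le_sub_le (hmeas S) (hind S) hjs (by positivity))
    rw [Set.mem_ofPred_eq, hmean]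
    have := (hS j s).1
    simp only [Set.mem_ofPred_eq, not_le] at hω
    unfold coObservation
    linarith

theorem stmt_13 (ρ κ Υ : ℝ)
    (hρ : ρ ∈ Set.Ioo (0 : ℝ) 1) (hκ : κ ∈ Set.Ioo (0 : ℝ) 1)
    (hsum : 1 < ρ + κ) (h34 : 3 * ρ + 4 * κ < 4) (hΥ : 1 ≤ Υ)
    (R C : ℕ → ℕ)
    (hR : ∀ S, R S = Nat.ceil ((S : ℝ) ^ ρ)) (hC : ∀ S, C S = Nat.ceil ((S : ℝ) ^ κ))
    (Ω : ℕ → Type) [∀ S, MeasurableSpace (Ω S)]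
    (μ : ∀ S, Measure (Ω S)) [∀ S, IsProbabilityMeasure (μ S)]
    (Z : ∀ S, Fin (R S) → Fin (C S) → Ω S → Bool)
    (hmeas : ∀ (S : ℕ) (i) (j), Measurable (Z S i j))
    (hind : ∀ S, iIndepFun
      (fun (p : Fin (R S) × Fin (C S)) ω => Z S p.1 p.2 ω) (μ S))
    (P : ∀ S, Fin (R S) → Fin (C S) → ℝ)
    (hmarg : ∀ (S : ℕ) (i) (j), μ S {ω | Z S i j ω = true} = ENNReal.ofReal (P S i j))
    (hPlo : ∀ (S : ℕ) (i) (j), (S : ℝ) ^ (1 - ρ - κ) ≤ P S i j)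
    (hPhi : ∀ (S : ℕ) (i) (j), P S i j ≤ Υ * (S : ℝ) ^ (1 - ρ - κ))
    (ε : ℝ) (hε : 0 < ε) :
    Tendsto (fun S => μ S {ω | ∀ s : Fin (C S), ∀ j : Fin (C S), j ≠ s →
        (∑ i, (if Z S i j ω then (1 : ℝ) else 0) * (if Z S i s ω then (1 : ℝ) else 0))
          ≤ (Υ ^ 2 + ε) * (S : ℝ) ^ (2 - ρ - 2 * κ)})
      atTop (nhds 1) ∧
    Tendsto (fun S => μ S {ω | ∀ s : Fin (C S), ∀ j : Fin (C S), j ≠ s →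
        (1 - ε) * (S : ℝ) ^ (2 - ρ - 2 * κ) ≤
          ∑ i, (if Z S i j ω then (1 : ℝ) else 0) * (if Z S i s ω then (1 : ℝ) else 0)})
      atTop (nhds 1) :=
  stmt_13_general ρ κ Υ hρ hκ h34 R C hR hC Ω μ Z hmeas hind P hmarg hPlo hPhi ε hε
end

section
/- Let Z_{ij} ∈ {0,1} follow the Bernoulli sampling model with parameters ρ, κ ∈ (0,1) satisfying ρ+κ > 1, 2ρ+κ < 2 and 3ρ+4κ < 4, and let M^{(1)} ∈ ℝ^{C×C} be defined by M^{(1)}_{js} = (N_{·j}+λ_B)⁻¹ ∑_r Z_{rs}(Z_{rj} − N_{·j}/R)/(N_{r·}+λ_A) with λ_A, λ_B ≥ 0. Then for every ε > 0, P(‖M^{(1)}‖₁ ≤ Υ² − Υ⁻² + ε) → 1 as S → ∞. -/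
/-!
Fix `δ > 0` and put `p = S ^ (1 - ρ - κ)`. Call the sample typical if every row count `N_{r·}`,
column count `N_{·j}` and co-occurrence count `∑_r Z_{rj} Z_{rs}` (`j ≠ s`) lies between `1 - δ`
and `Υ + δ` (`Υ² + δ` for co-occurrences) times `p C`, `p R`, `p² R`, the lower bounds of their
means. On a typical sample the diagonal entry of a column of `M⁽¹⁾` is at most `((1 - δ) p C)⁻¹`,
which tends to `0`. For `j ≠ s` the two terms `∑_r Z_{rj} Z_{rs} / (N_{r·} + λ_A)` and
`(N_{·j} / R) ∑_r Z_{rs} / (N_{r·} + λ_A)` lie in a common interval whose length divided by `N_{·j}`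
is `1 / C` times a constant tending to `Υ² - Υ⁻¹` as `δ → 0`. So every column sum of `|M⁽¹⁾|` is at
most `Υ² - Υ⁻¹ + o(1) ≤ Υ² - Υ⁻² + o(1)`.

By Hoeffding's inequality and a union bound, the sample fails to be typical with probability at most
`2 (R e^{-2δ²p²C} + C e^{-2δ²p²R} + C² e^{-2δ²p⁴R})`. The conditions `2ρ + κ < 2` and
`3ρ + 4κ < 4` make `p²C`, `p²R` and `p⁴R` grow like positive powers of `S`, so this tends to `0`.
-/

open MeasureTheory Filter ProbabilityTheory Real Finset

theorem sum_mul_mem_Icc {ι α : Type*} [CommSemiring α] [PartialOrder α] [IsOrderedRing α]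
    {s : Finset ι} {c w : ι → α} {a b : α} (hc : ∀ i ∈ s, 0 ≤ c i)
    (hw : ∀ i ∈ s, w i ∈ Set.Icc a b) :
    ∑ i ∈ s, c i * w i ∈ Set.Icc (a * ∑ i ∈ s, c i) (b * ∑ i ∈ s, c i) := by
  rw [mul_sum, mul_sum]
  exact ⟨sum_le_sum fun i hi =>
      (mul_comm a (c i)).trans_le (mul_le_mul_of_nonneg_left (hw i hi).1 (hc i hi)),
    sum_le_sum fun i hi =>
      (mul_le_mul_of_nonneg_left (hw i hi).2 (hc i hi)).trans_eq (mul_comm (c i) b)⟩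

section Independence

variable {Ω : Type*} [MeasurableSpace Ω] {μ : Measure Ω}

theorem ProbabilityTheory.iIndepFun.iIndepSet_setOf_forall_mem {α κ : Type*} {f : α → Ω → Bool}
    (hind : iIndepFun f μ) (hmeas : ∀ a, Measurable (f a)) {φ : κ → Finset α}
    (hφ : Pairwise (Function.onFun Disjoint φ)) :
    iIndepSet (fun k => {ω | ∀ a ∈ φ k, f a ω = true}) μ := by
  classical
  have hset : ∀ B : Finset α, {ω | ∀ a ∈ B, f a ω = true} = ⋂ a ∈ B, f a ⁻¹' {true} :=
    fun B => by ext; simp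
  have hblock : ∀ B : Finset α,
      μ {ω | ∀ a ∈ B, f a ω = true} = ∏ a ∈ B, μ (f a ⁻¹' {true}) := fun B => by
    rw [hset]; exact hind.meas_biInter fun a _ => ⟨{true}, trivial, rfl⟩
  have hmeasB : ∀ B : Finset α, MeasurableSet {ω | ∀ a ∈ B, f a ω = true} := fun B => by
    rw [hset]; exact B.measurableSet_biInter fun a _ => hmeas a (measurableSet_singleton true)
  rw [iIndepSet_iff_meas_biInter fun k => hmeasB (φ k)]
  intro T
  have hunion : ⋂ k ∈ T, {ω | ∀ a ∈ φ k, f a ω = true} =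
      {ω | ∀ a ∈ T.biUnion φ, f a ω = true} := by
    ext ω; simp only [Set.mem_iInter, Set.mem_ofPred_eq, mem_biUnion]; grind
  rw [hunion, hblock, prod_biUnion fun k _ l _ hkl => hφ hkl]
  exact prod_congr rfl fun k _ => (hblock (φ k)).symm

end Independence

section Hoeffding

variable {Ω ι : Type*} [MeasurableSpace Ω] {μ : Measure Ω} [IsProbabilityMeasure μ] [Fintype ι]

theorem measureReal_sum_notMem_Ioo_le {X : ι → Ω → ℝ} (hind : iIndepFun X μ)
    (hmeas : ∀ i, Measurable (X i)) (hX : ∀ i ω, X i ω ∈ Set.Icc (0 : ℝ) 1) {a b t : ℝ}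
    (ha : a ≤ ∑ i, μ[X i]) (hb : ∑ i, μ[X i] ≤ b) (ht : 0 ≤ t) :
    μ.real {ω | ∑ i, X i ω ∉ Set.Ioo (a - t) (b + t)} ≤
      2 * exp (-2 * t ^ 2 / Fintype.card ι) := by
  set Y : ι → Ω → ℝ := fun i ω => X i ω - μ[X i]
  have hY : ∀ i, HasSubgaussianMGF (Y i) (1 / 4) μ := fun i => by
    convert hasSubgaussianMGF_of_mem_Icc (μ := μ) (hmeas i).aemeasurable (ae_of_all _ (hX i))
    norm_num
  have hindY : iIndepFun Y μ := hind.comp _ fun i => measurable_id.sub_const _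
  have hindY' : iIndepFun (fun i => -Y i) μ := hindY.comp _ fun i => measurable_neg
  have hexp : exp (-t ^ 2 / (2 * ∑ _i : ι, (1 / 4 : ℝ))) = exp (-2 * t ^ 2 / Fintype.card ι) := by
    congr 1
    simp only [one_div, sum_const, card_univ, nsmul_eq_mul]
    ring
  have hupper := HasSubgaussianMGF.measure_sum_ge_le_of_iIndepFun hindY (s := univ)
    (fun i _ => hY i) ht
  have hlower := HasSubgaussianMGF.measure_sum_ge_le_of_iIndepFun hindY' (s := univ)
    (fun i _ => (hY i).neg) ht
  push_cast at hupper hlower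
  rw [hexp] at hupper hlower
  have hsub : {ω | ∑ i, X i ω ∉ Set.Ioo (a - t) (b + t)} ⊆
      {ω | t ≤ ∑ i, (-Y i) ω} ∪ {ω | t ≤ ∑ i, Y i ω} := by
    intro ω hω
    simp only [Set.mem_ofPred_eq, Set.mem_Ioo, not_and_or, not_lt] at hω
    simp only [Y, Set.mem_union, Set.mem_ofPred_eq, Pi.neg_apply, sum_neg_distrib,
      sum_sub_distrib]
    rcases hω with h | h
    · left; linarith
    · right; linarith
  calc μ.real _ ≤ _ := measureReal_mono hsub
    _ ≤ _ := (measureReal_union_le _ _).trans (by linarith)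

theorem measureReal_sum_indicator_notMem_Ioo_le {G : ι → Set Ω} (hG : ∀ i, MeasurableSet (G i))
    (hind : iIndepSet G μ) {q Υ δ : ℝ} (hq : ∀ i, μ.real (G i) ∈ Set.Icc q (Υ * q))
    (hq₀ : 0 ≤ q) (hδ : 0 ≤ δ) :
    μ.real {ω | ∑ i, (G i).indicator 1 ω ∉
        Set.Ioo ((1 - δ) * (q * Fintype.card ι)) ((Υ + δ) * (q * Fintype.card ι))} ≤
      2 * exp (-(2 * δ ^ 2 * (q ^ 2 * Fintype.card ι))) := by
  set n : ℝ := (Fintype.card ι : ℝ)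
  have hmean : ∀ i, μ[(G i).indicator 1] = μ.real (G i) := fun i => integral_indicator_one (hG i)
  have hlo : q * n ≤ ∑ i, μ[(G i).indicator 1] := calc
    q * n = ∑ _i : ι, q := by simp [n, mul_comm]
    _ ≤ _ := sum_le_sum fun i _ => (hmean i).symm ▸ (hq i).1
  have hhi : ∑ i, μ[(G i).indicator 1] ≤ Υ * (q * n) := calc
    _ ≤ ∑ _i : ι, Υ * q := sum_le_sum fun i _ => (hmean i).symm ▸ (hq i).2
    _ = Υ * (q * n) := by simp only [sum_const, card_univ, nsmul_eq_mul, n]; ring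
  have h := measureReal_sum_notMem_Ioo_le hind.iIndepFun_indicator
    (fun i => measurable_const.indicator (hG i))
    (fun i ω => by by_cases hω : ω ∈ G i <;> simp [hω]) hlo hhi (t := δ * (q * n))
    (by positivity)
  rw [show q * n - δ * (q * n) = (1 - δ) * (q * n) by ring,
    show Υ * (q * n) + δ * (q * n) = (Υ + δ) * (q * n) by ring] at h
  refine h.trans_eq ?_
  rw [show -2 * (δ * (q * n)) ^ 2 / n = -(2 * δ ^ 2 * q ^ 2 * (n * n / n)) by ring,
    mul_self_div_self, mul_assoc]

end Hoeffding

section Backfitting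

variable {R C : ℕ}

noncomputable def backfitMatrix (lamA lamB : ℝ) (z : Fin R → Fin C → ℝ) :
    Matrix (Fin C) (Fin C) ℝ :=
  fun j s => ((∑ i, z i j) + lamB)⁻¹ *
    ∑ r, z r s * (z r j - (∑ i, z i j) / R) / ((∑ j', z r j') + lamA)

theorem backfitMatrix_eq_inv_mul_sub (lamA lamB : ℝ) (z : Fin R → Fin C → ℝ) (j s : Fin C) :
    backfitMatrix lamA lamB z j s = ((∑ i, z i j) + lamB)⁻¹ *
      (∑ r, z r j * z r s * ((∑ j', z r j') + lamA)⁻¹ -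
        (∑ i, z i j) / R * ∑ r, z r s * ((∑ j', z r j') + lamA)⁻¹) := by
  simp only [backfitMatrix]
  congr 1
  rw [mul_sum, ← sum_sub_distrib]
  congr 1 with r
  ring

structure IsTypical (z : Fin R → Fin C → ℝ) (δ Υ p : ℝ) : Prop where
  row_mem : ∀ r, ∑ j, z r j ∈ Set.Ioo ((1 - δ) * (p * C)) ((Υ + δ) * (p * C))
  col_mem : ∀ j, ∑ i, z i j ∈ Set.Ioo ((1 - δ) * (p * R)) ((Υ + δ) * (p * R))
  pair_mem : ∀ j s, j ≠ s →
    ∑ r, z r j * z r s ∈ Set.Ioo ((1 - δ) * (p ^ 2 * R)) ((Υ ^ 2 + δ) * (p ^ 2 * R))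

noncomputable def backfitOffDiagBound (δ Υ : ℝ) : ℝ :=
  ((Υ + δ) ^ 2 / (1 - δ) - (1 - δ) ^ 2 / (Υ + 2 * δ)) / (1 - δ)

theorem backfitOffDiagBound_nonneg {δ Υ : ℝ} (hδ₀ : 0 ≤ δ) (hδ₁ : δ < 1) (hΥ : 1 ≤ Υ) :
    0 ≤ backfitOffDiagBound δ Υ := by
  have h₁ : 1 ≤ (Υ + δ) ^ 2 / (1 - δ) := by
    rw [le_div_iff₀ (by linarith)]; nlinarith
  have h₂ : (1 - δ) ^ 2 / (Υ + 2 * δ) ≤ 1 := by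
    rw [div_le_one (by linarith)]; nlinarith
  exact div_nonneg (by linarith) (by linarith)

theorem exists_backfitOffDiagBound_lt {Υ t : ℝ} (hΥ : 0 < Υ) (ht : Υ ^ 2 - Υ⁻¹ < t) :
    ∃ δ ∈ Set.Ioo (0 : ℝ) 1, backfitOffDiagBound δ Υ < t := by
  have hcont : ContinuousAt (fun δ => backfitOffDiagBound δ Υ) 0 := by
    unfold backfitOffDiagBound
    fun_prop (disch := norm_num [hΥ.ne'])
  have h0 : backfitOffDiagBound 0 Υ = Υ ^ 2 - Υ⁻¹ := by simp [backfitOffDiagBound]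
  rw [← h0] at ht
  obtain ⟨δ, hlt, hδ⟩ := ((hcont.eventually (eventually_lt_nhds ht)).filter_mono
    nhdsWithin_le_nhds |>.and (Ioo_mem_nhdsGT one_pos)).exists
  exact ⟨δ, hδ, hlt⟩

namespace IsTypical

variable {z : Fin R → Fin C → ℝ} {δ Υ p lamA lamB : ℝ}

theorem rows_pos (h : IsTypical z δ Υ p) (j : Fin C) : 0 < R :=
  Nat.pos_of_ne_zero fun hR => by subst hR; simpa using h.col_mem j

theorem inv_rowSum_add_mem_Icc (h : IsTypical z δ Υ p) (hδ₁ : δ < 1) (hp : 0 < p) (hC : 0 < C)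
    (hlamA : lamA ∈ Set.Icc 0 (δ * (p * C))) (r : Fin R) :
    ((∑ j, z r j) + lamA)⁻¹ ∈ Set.Icc ((Υ + 2 * δ) * (p * C))⁻¹ ((1 - δ) * (p * C))⁻¹ := by
  have hpos : 0 < (1 - δ) * (p * C) := by have := sub_pos.2 hδ₁; positivity
  have hsplit : (Υ + 2 * δ) * (p * C) = (Υ + δ) * (p * C) + δ * (p * C) := by ring
  obtain ⟨hlo, hhi⟩ := h.row_mem r
  exact ⟨inv_anti₀ (by linarith [hlamA.1]) (by linarith [hlamA.2]),
    inv_anti₀ hpos (by linarith [hlamA.1])⟩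

theorem pairWeightedSum_mem_Icc (h : IsTypical z δ Υ p) (hz : ∀ r j, 0 ≤ z r j)
    (hδ₀ : 0 ≤ δ) (hδ₁ : δ < 1) (hΥ : 1 ≤ Υ) (hp : 0 < p)
    (hlamA : lamA ∈ Set.Icc 0 (δ * (p * C))) {j s : Fin C} (hjs : j ≠ s) :
    ∑ r, z r j * z r s * ((∑ j', z r j') + lamA)⁻¹ ∈
      Set.Icc (((Υ + 2 * δ) * (p * C))⁻¹ * ((1 - δ) ^ 2 * (p ^ 2 * R)))
        (((1 - δ) * (p * C))⁻¹ * ((Υ + δ) ^ 2 * (p ^ 2 * R))) := by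
  have hA := sum_mul_mem_Icc (s := univ) (fun r _ => mul_nonneg (hz r j) (hz r s))
    fun r _ => h.inv_rowSum_add_mem_Icc hδ₁ hp s.pos hlamA r
  have hpair := h.pair_mem j s hjs
  have hp2R : 0 ≤ p ^ 2 * R := by positivity
  refine ⟨le_trans (mul_le_mul_of_nonneg_left (le_trans ?_ hpair.1.le) ?_) hA.1,
    hA.2.trans (mul_le_mul_of_nonneg_left (hpair.2.le.trans ?_) ?_)⟩
  · exact mul_le_mul_of_nonneg_right (by nlinarith) hp2R
  · have := sub_pos.2 hδ₁; positivity
  · exact mul_le_mul_of_nonneg_right (by nlinarith) hp2R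
  · have := sub_pos.2 hδ₁; positivity

theorem colMean_mul_weightedSum_mem_Icc (h : IsTypical z δ Υ p) (hz : ∀ r j, 0 ≤ z r j)
    (hδ₀ : 0 ≤ δ) (hδ₁ : δ < 1) (hΥ : 1 ≤ Υ) (hp : 0 < p)
    (hlamA : lamA ∈ Set.Icc 0 (δ * (p * C))) (j s : Fin C) :
    (∑ i, z i j) / R * ∑ r, z r s * ((∑ j', z r j') + lamA)⁻¹ ∈
      Set.Icc (((Υ + 2 * δ) * (p * C))⁻¹ * ((1 - δ) ^ 2 * (p ^ 2 * R)))
        (((1 - δ) * (p * C))⁻¹ * ((Υ + δ) ^ 2 * (p ^ 2 * R))) := by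
  have hR : (0 : ℝ) < R := Nat.cast_pos.2 (h.rows_pos s)
  have h1δ : 0 < 1 - δ := sub_pos.2 hδ₁
  have hw := h.inv_rowSum_add_mem_Icc hδ₁ hp s.pos hlamA
  have hB := sum_mul_mem_Icc (s := univ) (fun r _ => hz r s) fun r _ => hw r
  have hlo : 0 ≤ ((Υ + 2 * δ) * (p * C))⁻¹ := by
    have : 0 < Υ + 2 * δ := by linarith
    positivity
  have hcol := h.col_mem s
  have hD : (∑ i, z i j) / R ∈ Set.Icc ((1 - δ) * p) ((Υ + δ) * p) :=
    ⟨(le_div_iff₀ hR).2 (by linarith [(h.col_mem j).1]),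
      (div_le_iff₀ hR).2 (by linarith [(h.col_mem j).2])⟩
  constructor
  · calc _ = (1 - δ) * p * (((Υ + 2 * δ) * (p * C))⁻¹ * ((1 - δ) * (p * R))) := by ring
      _ ≤ _ := mul_le_mul hD.1 (le_trans (mul_le_mul_of_nonneg_left hcol.1.le hlo) hB.1)
          (by positivity) (hD.1.trans' (mul_nonneg h1δ.le hp.le))
  · calc _ ≤ (Υ + δ) * p * (((1 - δ) * (p * C))⁻¹ * ((Υ + δ) * (p * R))) :=
          mul_le_mul hD.2 (hB.2.trans (mul_le_mul_of_nonneg_left hcol.2.le (by positivity)))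
            (sum_nonneg fun r _ => mul_nonneg (hz r s) (hlo.trans (hw r).1)) (by positivity)
      _ = _ := by ring

theorem abs_backfitMatrix_le_of_ne (h : IsTypical z δ Υ p) (hz : ∀ r j, 0 ≤ z r j)
    (hδ₀ : 0 ≤ δ) (hδ₁ : δ < 1) (hΥ : 1 ≤ Υ) (hp : 0 < p)
    (hlamA : lamA ∈ Set.Icc 0 (δ * (p * C))) (hlamB : 0 ≤ lamB) {j s : Fin C} (hjs : j ≠ s) :
    |backfitMatrix lamA lamB z j s| ≤ backfitOffDiagBound δ Υ / C := by
  have hC : (0 : ℝ) < C := Nat.cast_pos.2 s.pos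
  have hR : (0 : ℝ) < R := Nat.cast_pos.2 (h.rows_pos s)
  have hpR : 0 < (1 - δ) * (p * R) := mul_pos (sub_pos.2 hδ₁) (mul_pos hp hR)
  have hcol : (1 - δ) * (p * R) ≤ (∑ i, z i j) + lamB := by linarith [(h.col_mem j).1]
  have hA := h.pairWeightedSum_mem_Icc hz hδ₀ hδ₁ hΥ hp hlamA hjs
  have hDB := h.colMean_mul_weightedSum_mem_Icc hz hδ₀ hδ₁ hΥ hp hlamA j s
  calc |backfitMatrix lamA lamB z j s|
      ≤ ((1 - δ) * (p * R))⁻¹ * (((1 - δ) * (p * C))⁻¹ * ((Υ + δ) ^ 2 * (p ^ 2 * R)) -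
          ((Υ + 2 * δ) * (p * C))⁻¹ * ((1 - δ) ^ 2 * (p ^ 2 * R))) := by
        rw [backfitMatrix_eq_inv_mul_sub, abs_mul, abs_of_nonneg (inv_nonneg.2 (hpR.le.trans hcol))]
        exact mul_le_mul (inv_anti₀ hpR hcol)
          (abs_sub_le_iff.2 ⟨by linarith [hA.2, hDB.1], by linarith [hA.1, hDB.2]⟩)
          (abs_nonneg _) (inv_nonneg.2 hpR.le)
    _ = backfitOffDiagBound δ Υ / C := by
        rw [backfitOffDiagBound]
        field_simp

theorem abs_backfitMatrix_self_le (h : IsTypical z δ Υ p) (hz : ∀ r j, z r j = 0 ∨ z r j = 1)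
    (hδ₁ : δ < 1) (hp : 0 < p) (hlamA : lamA ∈ Set.Icc 0 (δ * (p * C))) (hlamB : 0 ≤ lamB)
    (s : Fin C) :
    |backfitMatrix lamA lamB z s s| ≤ ((1 - δ) * (p * C))⁻¹ := by
  have hR : (0 : ℝ) < R := Nat.cast_pos.2 (h.rows_pos s)
  have hpC : 0 < (1 - δ) * (p * C) := mul_pos (sub_pos.2 hδ₁) (mul_pos hp (Nat.cast_pos.2 s.pos))
  have hz₀ : ∀ r j, 0 ≤ z r j := fun r j => by rcases hz r j with h | h <;> simp [h]
  have hB := sum_mul_mem_Icc (s := univ) (fun r _ => hz₀ r s)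
    fun r _ => h.inv_rowSum_add_mem_Icc hδ₁ hp s.pos hlamA r
  set N := ∑ i, z i s
  set B := ∑ r, z r s * ((∑ j', z r j') + lamA)⁻¹
  have hN : N ≤ R := by
    simpa using sum_le_sum fun i (_ : i ∈ univ) =>
      show z i s ≤ 1 by rcases hz i s with h | h <;> simp [h]
  have hN₀ : 0 ≤ N := sum_nonneg fun i _ => hz₀ i s
  have hB₀ : 0 ≤ B := sum_nonneg fun r _ =>
    mul_nonneg (hz₀ r s) (inv_nonneg.2 (add_nonneg (sum_nonneg fun j _ => hz₀ r j) hlamA.1))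
  have hM : backfitMatrix lamA lamB z s s = (N + lamB)⁻¹ * ((1 - N / R) * B) := by
    rw [backfitMatrix_eq_inv_mul_sub, sub_mul, one_mul]
    congr 2
    exact sum_congr rfl fun r _ => by rcases hz r s with h | h <;> simp [h]
  have hD : |1 - N / R| ≤ 1 := by
    rw [abs_le]
    constructor <;> linarith [div_le_one_of_le₀ hN hR.le, div_nonneg hN₀ hR.le]
  have hNlam : 0 ≤ (N + lamB)⁻¹ := inv_nonneg.2 (add_nonneg hN₀ hlamB)
  calc |backfitMatrix lamA lamB z s s| = (N + lamB)⁻¹ * (|1 - N / R| * B) := by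
        rw [hM, abs_mul, abs_mul, abs_of_nonneg hNlam, abs_of_nonneg hB₀]
    _ ≤ (N + lamB)⁻¹ * (1 * (((1 - δ) * (p * C))⁻¹ * N)) :=
        mul_le_mul_of_nonneg_left (mul_le_mul hD hB.2 hB₀ zero_le_one) hNlam
    _ = ((1 - δ) * (p * C))⁻¹ * ((N + lamB)⁻¹ * N) := by ring
    _ ≤ ((1 - δ) * (p * C))⁻¹ := mul_le_of_le_one_right (inv_nonneg.2 hpC.le)
        (inv_mul_le_one_of_le₀ (le_add_of_nonneg_right hlamB) (add_nonneg hN₀ hlamB))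

theorem sum_abs_backfitMatrix_le (h : IsTypical z δ Υ p) (hz : ∀ r j, z r j = 0 ∨ z r j = 1)
    (hδ₀ : 0 ≤ δ) (hδ₁ : δ < 1) (hΥ : 1 ≤ Υ) (hp : 0 < p)
    (hlamA : lamA ∈ Set.Icc 0 (δ * (p * C))) (hlamB : 0 ≤ lamB) (s : Fin C) :
    ∑ j, |backfitMatrix lamA lamB z j s| ≤
      backfitOffDiagBound δ Υ + ((1 - δ) * (p * C))⁻¹ := by
  have hz₀ : ∀ r j, 0 ≤ z r j := fun r j => by rcases hz r j with h | h <;> simp [h]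
  have hC : (0 : ℝ) < C := Nat.cast_pos.2 s.pos
  have hoff : ∑ j ∈ univ.erase s, |backfitMatrix lamA lamB z j s| ≤ backfitOffDiagBound δ Υ :=
    calc _ ≤ ∑ j ∈ univ.erase s, backfitOffDiagBound δ Υ / C := sum_le_sum fun j hj =>
          h.abs_backfitMatrix_le_of_ne hz₀ hδ₀ hδ₁ hΥ hp hlamA hlamB (ne_of_mem_erase hj)
      _ ≤ ∑ _j, backfitOffDiagBound δ Υ / C := sum_le_sum_of_subset_of_nonneg
          (erase_subset _ _) fun _ _ _ =>
            div_nonneg (backfitOffDiagBound_nonneg hδ₀ hδ₁ hΥ) hC.le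
      _ = backfitOffDiagBound δ Υ := by
          rw [sum_const, card_univ, Fintype.card_fin, nsmul_eq_mul]; field_simp
  rw [← add_sum_erase _ _ (mem_univ s)]
  linarith [h.abs_backfitMatrix_self_le hz hδ₁ hp hlamA hlamB s]

end IsTypical

end Backfitting

section Sampling

variable {Ω : Type*} [MeasurableSpace Ω] {μ : Measure Ω} {R C : ℕ}
  {Z : Fin R → Fin C → Ω → Bool} {δ Υ p : ℝ}

theorem measureReal_sum_notMem_Ioo_le_of_injective [IsProbabilityMeasure μ] {ι : Type*} [Fintype ι]
    {e : ι → Fin R × Fin C} (he : e.Injective) (hmeas : ∀ i j, Measurable (Z i j))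
    (hind : iIndepFun (fun q : Fin R × Fin C => Z q.1 q.2) μ) (hδ : 0 ≤ δ) (hp : 0 ≤ p)
    (hprob : ∀ i j, μ.real {ω | Z i j ω = true} ∈ Set.Icc p (Υ * p)) :
    μ.real {ω | ∑ i, (if Z (e i).1 (e i).2 ω then (1 : ℝ) else 0) ∉
        Set.Ioo ((1 - δ) * (p * Fintype.card ι)) ((Υ + δ) * (p * Fintype.card ι))} ≤
      2 * exp (-(2 * δ ^ 2 * (p ^ 2 * Fintype.card ι))) := by
  have hI : iIndepSet (fun i => {ω | Z (e i).1 (e i).2 ω = true}) μ := by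
    simpa using hind.iIndepSet_setOf_forall_mem (fun q => hmeas q.1 q.2)
      (φ := fun i => {e i}) fun i k hik => disjoint_singleton.2 (he.ne hik)
  simpa [Set.indicator_apply] using measureReal_sum_indicator_notMem_Ioo_le
    (G := fun i => {ω | Z (e i).1 (e i).2 ω = true})
    (fun i => hmeas _ _ (measurableSet_singleton true)) hI (fun i => hprob _ _) hp hδ

theorem measureReal_setOf_and_mem_Icc (hind : iIndepFun (fun q : Fin R × Fin C => Z q.1 q.2) μ)
    (hp : 0 ≤ p) (hprob : ∀ i j, μ.real {ω | Z i j ω = true} ∈ Set.Icc p (Υ * p))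
    {j s : Fin C} (hjs : j ≠ s) (r : Fin R) :
    μ.real {ω | Z r j ω = true ∧ Z r s ω = true} ∈ Set.Icc (p ^ 2) (Υ ^ 2 * p ^ 2) := by
  have hprod := (hind.indepFun (i := (r, j)) (j := (r, s)) (by simpa using hjs))
    |>.measure_inter_preimage_eq_mul {true} {true} (measurableSet_singleton _)
      (measurableSet_singleton _)
  have hreal : μ.real {ω | Z r j ω = true ∧ Z r s ω = true} =
      μ.real {ω | Z r j ω = true} * μ.real {ω | Z r s ω = true} := by
    simp only [measureReal_def, ← ENNReal.toReal_mul]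
    exact congrArg ENNReal.toReal hprod
  obtain ⟨hj₁, hj₂⟩ := hprob r j
  obtain ⟨hs₁, hs₂⟩ := hprob r s
  rw [hreal, sq, sq, mul_mul_mul_comm]
  exact ⟨mul_le_mul hj₁ hs₁ hp (hp.trans hj₁),
    mul_le_mul hj₂ hs₂ (hp.trans hs₁) (hp.trans (hj₁.trans hj₂))⟩

theorem measureReal_pairSum_notMem_Ioo_le [IsProbabilityMeasure μ]
    (hmeas : ∀ i j, Measurable (Z i j))
    (hind : iIndepFun (fun q : Fin R × Fin C => Z q.1 q.2) μ) (hδ : 0 ≤ δ) (hp : 0 ≤ p)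
    (hprob : ∀ i j, μ.real {ω | Z i j ω = true} ∈ Set.Icc p (Υ * p)) {j s : Fin C}
    (hjs : j ≠ s) :
    μ.real {ω | ∑ r, (if Z r j ω then (1 : ℝ) else 0) * (if Z r s ω then 1 else 0) ∉
        Set.Ioo ((1 - δ) * (p ^ 2 * R)) ((Υ ^ 2 + δ) * (p ^ 2 * R))} ≤
      2 * exp (-(2 * δ ^ 2 * (p ^ 4 * R))) := by
  have hI : iIndepSet (fun r => {ω | Z r j ω = true ∧ Z r s ω = true}) μ := by
    simpa using hind.iIndepSet_setOf_forall_mem (fun q => hmeas q.1 q.2)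
      (φ := fun r => {(r, j), (r, s)}) fun r k hrk => by
        simp only [Function.onFun, disjoint_insert_left, disjoint_insert_right, disjoint_singleton,
          mem_insert, mem_singleton, Prod.mk.injEq]
        grind
  have hcount := measureReal_sum_indicator_notMem_Ioo_le
    (G := fun r => {ω | Z r j ω = true ∧ Z r s ω = true})
    (fun r => (hmeas r j (measurableSet_singleton true)).inter
      (hmeas r s (measurableSet_singleton true))) hI
    (measureReal_setOf_and_mem_Icc hind hp hprob hjs) (sq_nonneg p) hδ
  have hsum : ∀ ω, ∑ r, {ω | Z r j ω = true ∧ Z r s ω = true}.indicator 1 ω =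
      ∑ r, (if Z r j ω then (1 : ℝ) else 0) * (if Z r s ω then 1 else 0) := fun ω =>
    sum_congr rfl fun r _ => by rw [ite_zero_mul_ite_zero, mul_one, Set.indicator_apply]; rfl
  rw [← pow_mul] at hcount
  simpa only [hsum, Fintype.card_fin] using hcount

noncomputable def typicalFailureBound (δ p : ℝ) (R C : ℕ) : ℝ :=
  2 * (R * exp (-(2 * δ ^ 2 * (p ^ 2 * C))) + C * exp (-(2 * δ ^ 2 * (p ^ 2 * R))) +
    C ^ 2 * exp (-(2 * δ ^ 2 * (p ^ 4 * R))))

theorem measureReal_not_isTypical_le [IsProbabilityMeasure μ] (hmeas : ∀ i j, Measurable (Z i j))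
    (hind : iIndepFun (fun q : Fin R × Fin C => Z q.1 q.2) μ) (hδ : 0 ≤ δ) (hp : 0 ≤ p)
    (hprob : ∀ i j, μ.real {ω | Z i j ω = true} ∈ Set.Icc p (Υ * p)) :
    μ.real {ω | ¬IsTypical (fun r j => if Z r j ω then (1 : ℝ) else 0) δ Υ p} ≤
      typicalFailureBound δ p R C := by
  set rowBad := fun r : Fin R => {ω | ∑ j, (if Z r j ω then (1 : ℝ) else 0) ∉
    Set.Ioo ((1 - δ) * (p * C)) ((Υ + δ) * (p * C))}
  set colBad := fun j : Fin C => {ω | ∑ i, (if Z i j ω then (1 : ℝ) else 0) ∉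
    Set.Ioo ((1 - δ) * (p * R)) ((Υ + δ) * (p * R))}
  set pairBad := fun q : Fin C × Fin C => {ω | ∑ r, (if Z r q.1 ω then (1 : ℝ) else 0) *
    (if Z r q.2 ω then 1 else 0) ∉ Set.Ioo ((1 - δ) * (p ^ 2 * R)) ((Υ ^ 2 + δ) * (p ^ 2 * R))}
  have hsub : {ω | ¬IsTypical (fun r j => if Z r j ω then (1 : ℝ) else 0) δ Υ p} ⊆
      (⋃ r, rowBad r) ∪ (⋃ j, colBad j) ∪ ⋃ q ∈ (univ : Finset _).offDiag, pairBad q := by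
    refine fun ω hω => by_contra fun hgood => hω ⟨fun r => ?_, fun j => ?_, fun j s hjs => ?_⟩ <;>
      refine by_contra fun hbad => hgood ?_
    · exact Or.inl (Or.inl (Set.mem_iUnion.2 ⟨r, hbad⟩))
    · exact Or.inl (Or.inr (Set.mem_iUnion.2 ⟨j, hbad⟩))
    · exact Or.inr (Set.mem_biUnion (x := (j, s)) (by simpa using hjs) hbad)
  have hrow : ∀ r, μ.real (rowBad r) ≤ 2 * exp (-(2 * δ ^ 2 * (p ^ 2 * C))) := fun r => by
    simpa only [Fintype.card_fin] using
      measureReal_sum_notMem_Ioo_le_of_injective (e := fun j => (r, j))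
      (fun _ _ h => (Prod.ext_iff.1 h).2) hmeas hind hδ hp hprob
  have hcol : ∀ j, μ.real (colBad j) ≤ 2 * exp (-(2 * δ ^ 2 * (p ^ 2 * R))) := fun j => by
    simpa only [Fintype.card_fin] using
      measureReal_sum_notMem_Ioo_le_of_injective (e := fun i => (i, j))
      (fun _ _ h => (Prod.ext_iff.1 h).1) hmeas hind hδ hp hprob
  have hcard : ((univ : Finset (Fin C)).offDiag.card : ℝ) ≤ C ^ 2 := by
    rw [offDiag_card, card_univ, Fintype.card_fin, ← sq]
    exact_mod_cast Nat.sub_le _ _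
  calc μ.real _ ≤ ∑ r, μ.real (rowBad r) + ∑ j, μ.real (colBad j) +
        ∑ q ∈ (univ : Finset _).offDiag, μ.real (pairBad q) :=
      (measureReal_mono hsub).trans <| (measureReal_union_le _ _).trans <| add_le_add
        ((measureReal_union_le _ _).trans <| add_le_add (measureReal_iUnion_fintype_le _)
          (measureReal_iUnion_fintype_le _))
        (measureReal_biUnion_finset_le _ _)
    _ ≤ ∑ _r : Fin R, 2 * exp (-(2 * δ ^ 2 * (p ^ 2 * C))) +
        ∑ _j : Fin C, 2 * exp (-(2 * δ ^ 2 * (p ^ 2 * R))) +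
        ∑ _q ∈ (univ : Finset (Fin C)).offDiag, 2 * exp (-(2 * δ ^ 2 * (p ^ 4 * R))) :=
      add_le_add (add_le_add (sum_le_sum fun r _ => hrow r) (sum_le_sum fun j _ => hcol j))
        (sum_le_sum fun q hq =>
          measureReal_pairSum_notMem_Ioo_le hmeas hind hδ hp hprob (by simpa using hq))
    _ ≤ typicalFailureBound δ p R C := by
      simp only [sum_const, card_univ, Fintype.card_fin, nsmul_eq_mul]
      have := mul_le_mul_of_nonneg_right hcard (exp_nonneg (-(2 * δ ^ 2 * (p ^ 4 * R))))
      rw [typicalFailureBound]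
      linarith

end Sampling

section Asymptotics

theorem tendsto_rpow_mul_exp_neg_mul_rpow {e c d : ℝ} (hc : 0 < c) (hd : 0 < d) :
    Tendsto (fun x : ℝ => x ^ e * exp (-(c * x ^ d))) atTop (nhds 0) := by
  refine ((tendsto_rpow_mul_exp_neg_mul_atTop_nhds_zero (e / d) c hc).comp
    (tendsto_rpow_atTop hd)).congr' ?_
  filter_upwards [eventually_ge_atTop 0] with x hx
  simp only [Function.comp, ← rpow_mul hx, mul_div_cancel₀ _ hd.ne', neg_mul]

theorem eventually_rpow_le_rpow_pow_mul_natCeil {x a : ℝ} (n : ℕ) {N : ℕ → ℕ}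
    (hN : ∀ S, N S = ⌈(S : ℝ) ^ a⌉₊) :
    ∀ᶠ S : ℕ in atTop, (S : ℝ) ^ (n * x + a) ≤ ((S : ℝ) ^ x) ^ n * N S := by
  filter_upwards [eventually_gt_atTop 0] with S hS
  have hS' : (0 : ℝ) < S := Nat.cast_pos.2 hS
  rw [rpow_add hS', mul_comm (n : ℝ), rpow_mul_natCast hS'.le, hN]
  gcongr
  exact Nat.le_ceil _

theorem tendsto_rpow_mul_natCeil_atTop {x a : ℝ} (hxa : 0 < x + a) {N : ℕ → ℕ}
    (hN : ∀ S, N S = ⌈(S : ℝ) ^ a⌉₊) :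
    Tendsto (fun S : ℕ => (S : ℝ) ^ x * N S) atTop atTop :=
  tendsto_atTop_mono' _
    ((eventually_rpow_le_rpow_pow_mul_natCeil 1 hN).mono fun S h => h.trans_eq (by rw [pow_one]))
    ((tendsto_rpow_atTop (by push_cast; linarith)).comp tendsto_natCast_atTop_atTop)

theorem tendsto_natCeil_rpow_pow_mul_exp_neg {a c d : ℝ} (k : ℕ) (ha : 0 ≤ a) (hc : 0 < c)
    (hd : 0 < d) {f : ℕ → ℝ} (hf : ∀ᶠ S : ℕ in atTop, (S : ℝ) ^ d ≤ f S) :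
    Tendsto (fun S : ℕ => (⌈(S : ℝ) ^ a⌉₊ : ℝ) ^ k * exp (-(c * f S))) atTop (nhds 0) := by
  have hlim := ((tendsto_rpow_mul_exp_neg_mul_rpow (e := a * k) hc hd).comp
    tendsto_natCast_atTop_atTop).const_mul (2 ^ k)
  rw [mul_zero] at hlim
  refine squeeze_zero' (Eventually.of_forall fun S => by positivity) ?_ hlim
  filter_upwards [hf, eventually_ge_atTop 1] with S hfS hS
  have hS1 : (1 : ℝ) ≤ S := by exact_mod_cast hS
  have hceil : (⌈(S : ℝ) ^ a⌉₊ : ℝ) ≤ 2 * (S : ℝ) ^ a := by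
    linarith [Nat.ceil_lt_add_one (rpow_nonneg (Nat.cast_nonneg S) a), one_le_rpow hS1 ha]
  calc (⌈(S : ℝ) ^ a⌉₊ : ℝ) ^ k * exp (-(c * f S))
      ≤ (2 * (S : ℝ) ^ a) ^ k * exp (-(c * (S : ℝ) ^ d)) := by gcongr
    _ = 2 ^ k * ((S : ℝ) ^ (a * k) * exp (-(c * (S : ℝ) ^ d))) := by
      rw [mul_pow, rpow_mul_natCast (Nat.cast_nonneg S)]; ring

theorem tendsto_typicalFailureBound {ρ κ δ : ℝ} (hρ : 0 < ρ) (hκ : 0 < κ)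
    (h2 : 2 * ρ + κ < 2) (h34 : 3 * ρ + 4 * κ < 4) (hδ : 0 < δ) {R C : ℕ → ℕ}
    (hR : ∀ S, R S = ⌈(S : ℝ) ^ ρ⌉₊) (hC : ∀ S, C S = ⌈(S : ℝ) ^ κ⌉₊) :
    Tendsto (fun S : ℕ => typicalFailureBound δ ((S : ℝ) ^ (1 - ρ - κ)) (R S) (C S)) atTop
      (nhds 0) := by
  have hc : 0 < 2 * δ ^ 2 := by positivity
  have hrow := tendsto_natCeil_rpow_pow_mul_exp_neg 1 hρ.le hc (by push_cast; linarith)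
    (eventually_rpow_le_rpow_pow_mul_natCeil (x := 1 - ρ - κ) 2 hC)
  have hcol := tendsto_natCeil_rpow_pow_mul_exp_neg 1 hκ.le hc (by push_cast; linarith)
    (eventually_rpow_le_rpow_pow_mul_natCeil (x := 1 - ρ - κ) 2 hR)
  have hpair := tendsto_natCeil_rpow_pow_mul_exp_neg 2 hκ.le hc (by push_cast; linarith)
    (eventually_rpow_le_rpow_pow_mul_natCeil (x := 1 - ρ - κ) 4 hR)
  simpa only [typicalFailureBound, ← hR, ← hC, pow_one, add_zero, mul_zero] using
    ((hrow.add hcol).add hpair).const_mul 2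

theorem tendsto_measure_one_of_measureReal_compl_le_s14 {Ω : ℕ → Type*}
    [∀ S, MeasurableSpace (Ω S)] {μ : ∀ S, Measure (Ω S)} [∀ S, IsProbabilityMeasure (μ S)]
    {t : ∀ S, Set (Ω S)} {e : ℕ → ℝ} (he : Tendsto e atTop (nhds 0))
    (h : ∀ᶠ S in atTop, (μ S).real (t S)ᶜ ≤ e S) :
    Tendsto (fun S => μ S (t S)) atTop (nhds 1) := by
  have hlow : Tendsto (fun S => 1 - ENNReal.ofReal (e S)) atTop (nhds 1) := by
    simpa using ENNReal.Tendsto.sub tendsto_const_nhds (ENNReal.tendsto_ofReal he)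
      (Or.inl ENNReal.one_ne_top)
  refine tendsto_of_tendsto_of_tendsto_of_le_of_le' hlow tendsto_const_nhds ?_
    (Eventually.of_forall fun S => prob_le_one)
  filter_upwards [h] with S hS
  have hunion : 1 ≤ μ S (t S) + μ S (t S)ᶜ := by
    simpa [Set.union_compl_self] using measure_union_le (μ := μ S) (t S) (t S)ᶜ
  calc 1 - ENNReal.ofReal (e S) ≤ 1 - μ S (t S)ᶜ := by
        gcongr; rw [← ofReal_measureReal]; exact ENNReal.ofReal_le_ofReal hS
    _ ≤ μ S (t S) := tsub_le_iff_right.2 hunion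

end Asymptotics

theorem stmt_14_general (ρ κ Υ lamA lamB : ℝ)
    (hρ : ρ ∈ Set.Ioo (0 : ℝ) 1) (hκ : κ ∈ Set.Ioo (0 : ℝ) 1)
    (h2 : 2 * ρ + κ < 2) (h34 : 3 * ρ + 4 * κ < 4)
    (hΥ : 1 ≤ Υ) (hlamA : 0 ≤ lamA) (hlamB : 0 ≤ lamB)
    (R C : ℕ → ℕ)
    (hR : ∀ S, R S = Nat.ceil ((S : ℝ) ^ ρ)) (hC : ∀ S, C S = Nat.ceil ((S : ℝ) ^ κ))
    (Ω : ℕ → Type) [∀ S, MeasurableSpace (Ω S)]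
    (μ : ∀ S, Measure (Ω S)) [∀ S, IsProbabilityMeasure (μ S)]
    (Z : ∀ S, Fin (R S) → Fin (C S) → Ω S → Bool)
    (hmeas : ∀ (S : ℕ) (i) (j), Measurable (Z S i j))
    (hind : ∀ S, iIndepFun
      (fun (p : Fin (R S) × Fin (C S)) ω => Z S p.1 p.2 ω) (μ S))
    (P : ∀ S, Fin (R S) → Fin (C S) → ℝ)
    (hmarg : ∀ (S : ℕ) (i) (j), μ S {ω | Z S i j ω = true} = ENNReal.ofReal (P S i j))
    (hPlo : ∀ (S : ℕ) (i) (j), (S : ℝ) ^ (1 - ρ - κ) ≤ P S i j)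
    (hPhi : ∀ (S : ℕ) (i) (j), P S i j ≤ Υ * (S : ℝ) ^ (1 - ρ - κ))
    (ε : ℝ) (hε : 0 < ε) :
    Tendsto (fun S => μ S {ω |
        let z : Fin (R S) → Fin (C S) → ℝ := fun r j => if Z S r j ω then 1 else 0;
        let Nrow : Fin (R S) → ℝ := fun r => ∑ j, z r j;
        let Ncol : Fin (C S) → ℝ := fun j => ∑ i, z i j;
        let M1 : Matrix (Fin (C S)) (Fin (C S)) ℝ := fun j s =>
          (Ncol j + lamB)⁻¹ *
            ∑ r, z r s * (z r j - Ncol j / (R S : ℝ)) / (Nrow r + lamA);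
        (⨆ s : Fin (C S), ∑ j : Fin (C S), |M1 j s|) ≤ Υ ^ 2 - (Υ⁻¹) ^ 2 + ε})
      atTop (nhds 1) := by
  have hΥ₀ : 0 < Υ := by linarith
  obtain ⟨δ, hδ, hδbound⟩ := exists_backfitOffDiagBound_lt hΥ₀ (t := Υ ^ 2 - Υ⁻¹ ^ 2 + ε)
    (by nlinarith [inv_le_one_of_one_le₀ hΥ, inv_nonneg.2 hΥ₀.le])
  have hpC := tendsto_rpow_mul_natCeil_atTop (x := 1 - ρ - κ) (by linarith [hρ.2]) hC
  refine tendsto_measure_one_of_measureReal_compl_le_s14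
    (tendsto_typicalFailureBound hρ.1 hκ.1 h2 h34 hδ.1 hR hC) ?_
  have hη : 0 < Υ ^ 2 - Υ⁻¹ ^ 2 + ε - backfitOffDiagBound δ Υ := sub_pos.2 hδbound
  filter_upwards [(hpC.const_mul_atTop hδ.1).eventually_ge_atTop lamA,
    ((hpC.const_mul_atTop (sub_pos.2 hδ.2)).inv_tendsto_atTop).eventually (eventually_le_nhds hη),
    eventually_gt_atTop 0] with S hlamAS hdiag hS
  have hp : 0 < (S : ℝ) ^ (1 - ρ - κ) := rpow_pos_of_pos (Nat.cast_pos.2 hS) _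
  have hprob : ∀ i j, (μ S).real {ω | Z S i j ω = true} ∈
      Set.Icc ((S : ℝ) ^ (1 - ρ - κ)) (Υ * (S : ℝ) ^ (1 - ρ - κ)) := fun i j => by
    rw [measureReal_def, hmarg, ENNReal.toReal_ofReal (hp.le.trans (hPlo S i j))]
    exact ⟨hPlo S i j, hPhi S i j⟩
  refine le_trans (measureReal_mono ?_)
    (measureReal_not_isTypical_le (hmeas S) (hind S) hδ.1.le hp.le hprob)
  intro ω hω htyp
  apply hω
  show (⨆ s, ∑ j, |backfitMatrix lamA lamB (fun r j => if Z S r j ω then 1 else 0) j s|) ≤ _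
  refine Real.iSup_le (fun s => (htyp.sum_abs_backfitMatrix_le (fun r j => by simp)
    hδ.1.le hδ.2 hΥ hp ⟨hlamA, by simpa [mul_assoc] using hlamAS⟩ hlamB s).trans ?_)
    ((backfitOffDiagBound_nonneg hδ.1.le hδ.2 hΥ).trans hδbound.le)
  linarith [show ((1 - δ) * ((S : ℝ) ^ (1 - ρ - κ) * C S))⁻¹ ≤ _ from hdiag]

theorem stmt_14 (ρ κ Υ lamA lamB : ℝ)
    (hρ : ρ ∈ Set.Ioo (0 : ℝ) 1) (hκ : κ ∈ Set.Ioo (0 : ℝ) 1)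
    (hsum : 1 < ρ + κ) (h2 : 2 * ρ + κ < 2) (h34 : 3 * ρ + 4 * κ < 4)
    (hΥ : 1 ≤ Υ) (hlamA : 0 ≤ lamA) (hlamB : 0 ≤ lamB)
    (R C : ℕ → ℕ)
    (hR : ∀ S, R S = Nat.ceil ((S : ℝ) ^ ρ)) (hC : ∀ S, C S = Nat.ceil ((S : ℝ) ^ κ))
    (Ω : ℕ → Type) [∀ S, MeasurableSpace (Ω S)]
    (μ : ∀ S, Measure (Ω S)) [∀ S, IsProbabilityMeasure (μ S)]
    (Z : ∀ S, Fin (R S) → Fin (C S) → Ω S → Bool)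
    (hmeas : ∀ (S : ℕ) (i) (j), Measurable (Z S i j))
    (hind : ∀ S, iIndepFun
      (fun (p : Fin (R S) × Fin (C S)) ω => Z S p.1 p.2 ω) (μ S))
    (P : ∀ S, Fin (R S) → Fin (C S) → ℝ)
    (hmarg : ∀ (S : ℕ) (i) (j), μ S {ω | Z S i j ω = true} = ENNReal.ofReal (P S i j))
    (hPlo : ∀ (S : ℕ) (i) (j), (S : ℝ) ^ (1 - ρ - κ) ≤ P S i j)
    (hPhi : ∀ (S : ℕ) (i) (j), P S i j ≤ Υ * (S : ℝ) ^ (1 - ρ - κ))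
    (ε : ℝ) (hε : 0 < ε) :
    Tendsto (fun S => μ S {ω |
        let z : Fin (R S) → Fin (C S) → ℝ := fun r j => if Z S r j ω then 1 else 0;
        let Nrow : Fin (R S) → ℝ := fun r => ∑ j, z r j;
        let Ncol : Fin (C S) → ℝ := fun j => ∑ i, z i j;
        let M1 : Matrix (Fin (C S)) (Fin (C S)) ℝ := fun j s =>
          (Ncol j + lamB)⁻¹ *
            ∑ r, z r s * (z r j - Ncol j / (R S : ℝ)) / (Nrow r + lamA);
        (⨆ s : Fin (C S), ∑ j : Fin (C S), |M1 j s|) ≤ Υ ^ 2 - (Υ⁻¹) ^ 2 + ε})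
      atTop (nhds 1) :=
  stmt_14_general ρ κ Υ lamA lamB hρ hκ h2 h34 hΥ hlamA hlamB R C hR hC Ω μ Z hmeas hind P hmarg
    hPlo hPhi ε hε
end

section
/- In the same intercept-only crossed random effects model, U_E = N ∑_{ij} Z_{ij}(Y_{ij} − N⁻¹∑_{i'j'}Z_{i'j'}Y_{i'j'})² has expectation E(U_E) = σ_A²(N² − ∑_i N_{i·}²) + σ_B²(N² − ∑_j N_{·j}²) + σ_E²(N² − N). -/
/-!
Expanding the square gives `U_E = N ∑ Z_p Y_p² - (∑ Z_p Y_p)²`. A weighted sum `∑ w_p Y_p` equals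
`(∑ w) m` plus a linear combination of the independent centred effects, in which `a_i` carries the
row total of `w`, `b_j` its column total and `e_p` the weight `w_p`; for such combinations
`E (m + ∑ c_k X_k)² = m² + ∑ c_k² E X_k²`. Taking `w = Z` and `w` a unit vector gives both
expectations, and `Z_p² = Z_p` turns `∑ Z_p²` into `N`.
-/

open MeasureTheory ProbabilityTheory

theorem mul_sum_mul_sq_sub_weightedMean {ι : Type*} [Fintype ι] (w y : ι → ℝ)
    (hw : ∀ k, 0 ≤ w k) :
    (∑ k, w k) * ∑ k, w k * (y k - (∑ k, w k)⁻¹ * ∑ k, w k * y k) ^ 2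
      = (∑ k, w k) * ∑ k, w k * y k ^ 2 - (∑ k, w k * y k) ^ 2 := by
  set W := ∑ k, w k
  by_cases hW : W = 0
  · have hw0 : ∀ k, w k = 0 := congrFun ((Fintype.sum_eq_zero_iff_of_nonneg hw).mp hW)
    simp [hW, hw0]
  set S := ∑ k, w k * y k
  have expand (c : ℝ) :
      ∑ k, w k * (y k - c) ^ 2 = ∑ k, w k * y k ^ 2 - 2 * c * S + c ^ 2 * W := by
    have hk (k : ι) :
        w k * (y k - c) ^ 2 = w k * y k ^ 2 - 2 * c * (w k * y k) + c ^ 2 * w k := by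
      ring
    simp only [hk, Finset.sum_add_distrib, Finset.sum_sub_distrib, ← Finset.mul_sum, S, W]
  rw [expand]
  field_simp
  ring

theorem integral_sq_const_add_sum_mul {Ω ι : Type*} [MeasurableSpace Ω] {μ : Measure Ω}
    [IsProbabilityMeasure μ] [Fintype ι] {X : ι → Ω → ℝ}
    (hX : ∀ k, MemLp (X k) 2 μ) (hind : Pairwise fun k l => IndepFun (X k) (X l) μ)
    (hmean : ∀ k, ∫ ω, X k ω ∂μ = 0) (m : ℝ) (c : ι → ℝ) :
    ∫ ω, (m + ∑ k, c k * X k ω) ^ 2 ∂μ = m ^ 2 + ∑ k, c k ^ 2 * ∫ ω, X k ω ^ 2 ∂μ := by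
  set T : Ω → ℝ := fun ω => ∑ k, c k * X k ω
  have hcX : ∀ k, MemLp (fun ω => c k * X k ω) 2 μ := fun k => (hX k).const_mul (c k)
  have hT : MemLp T 2 μ := memLp_finsetSum _ fun k _ => hcX k
  have hTint : Integrable T μ := hT.integrable one_le_two
  have hTmean : ∫ ω, T ω ∂μ = 0 := by
    simp [T, integral_finsetSum _ fun k _ => (hcX k).integrable one_le_two, integral_const_mul,
      hmean]
  have hTvar : ∫ ω, T ω ^ 2 ∂μ = ∑ k, c k ^ 2 * ∫ ω, X k ω ^ 2 ∂μ := by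
    have hsum : T = ∑ k, fun ω => c k * X k ω := by ext ω; simp [T]
    rw [← variance_of_integral_eq_zero hT.aemeasurable hTmean, hsum,
      IndepFun.variance_sum (fun k _ => hcX k) fun k _ l _ hkl =>
        (hind hkl).comp (measurable_const_mul (c k)) (measurable_const_mul (c l))]
    refine Finset.sum_congr rfl fun k _ => ?_
    rw [variance_const_mul, variance_of_integral_eq_zero (hX k).aemeasurable (hmean k)]
  have hexpand (ω : Ω) : (m + T ω) ^ 2 = m ^ 2 + 2 * m * T ω + T ω ^ 2 := by ring
  show ∫ ω, (m + T ω) ^ 2 ∂μ = _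
  simp_rw [hexpand]
  rw [integral_add (by fun_prop) hT.integrable_sq, integral_add (by fun_prop) (by fun_prop),
    integral_const_mul, hTmean, hTvar]
  simp

section CrossedEffects

variable {α β Ω : Type*} [MeasurableSpace Ω]

def effectWeights [Fintype α] [Fintype β] (w : α × β → ℝ) : α ⊕ β ⊕ α × β → ℝ :=
  Sum.elim (fun i => ∑ j, w (i, j)) (Sum.elim (fun j => ∑ i, w (i, j)) w)

theorem sum_mul_crossed_obs_eq [Fintype α] [Fintype β] (m : ℝ) (a : α → ℝ) (b : β → ℝ)
    (e : α × β → ℝ) (w : α × β → ℝ) :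
    ∑ p, w p * (m + a p.1 + b p.2 + e p)
      = (∑ p, w p) * m + ∑ k, effectWeights w k * Sum.elim a (Sum.elim b e) k := by
  simp only [effectWeights, Fintype.sum_sum_type, Sum.elim_inl, Sum.elim_inr, Finset.sum_mul,
    mul_add, Finset.sum_add_distrib, Fintype.sum_prod_type]
  rw [Finset.sum_comm (f := fun i j => w (i, j) * b j)]
  ring

structure IsCrossedRandomEffects (μ : Measure Ω) (a : α → Ω → ℝ) (b : β → Ω → ℝ)
    (e : α × β → Ω → ℝ) (σA σB σE : ℝ) : Prop where
  indepFun : Pairwise fun k l =>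
    IndepFun (Sum.elim a (Sum.elim b e) k) (Sum.elim a (Sum.elim b e) l) μ
  memLp_a : ∀ i, MemLp (a i) 2 μ
  memLp_b : ∀ j, MemLp (b j) 2 μ
  memLp_e : ∀ p, MemLp (e p) 2 μ
  integral_a : ∀ i, ∫ ω, a i ω ∂μ = 0
  integral_b : ∀ j, ∫ ω, b j ω ∂μ = 0
  integral_e : ∀ p, ∫ ω, e p ω ∂μ = 0
  integral_sq_a : ∀ i, ∫ ω, a i ω ^ 2 ∂μ = σA
  integral_sq_b : ∀ j, ∫ ω, b j ω ^ 2 ∂μ = σB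
  integral_sq_e : ∀ p, ∫ ω, e p ω ^ 2 ∂μ = σE

namespace IsCrossedRandomEffects

variable {μ : Measure Ω} {a : α → Ω → ℝ} {b : β → Ω → ℝ} {e : α × β → Ω → ℝ} {σA σB σE : ℝ}

theorem memLp_obs [IsFiniteMeasure μ] (h : IsCrossedRandomEffects μ a b e σA σB σE) (m : ℝ)
    (p : α × β) : MemLp (fun ω => m + a p.1 ω + b p.2 ω + e p ω) 2 μ :=
  (((memLp_const m).add (h.memLp_a p.1)).add (h.memLp_b p.2)).add (h.memLp_e p)

variable [Fintype α] [Fintype β] [IsProbabilityMeasure μ]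

theorem integral_sq_sum_mul (h : IsCrossedRandomEffects μ a b e σA σB σE) (m : ℝ)
    (w : α × β → ℝ) :
    ∫ ω, (∑ p, w p * (m + a p.1 ω + b p.2 ω + e p ω)) ^ 2 ∂μ
      = (∑ p, w p) ^ 2 * m ^ 2 + σA * ∑ i, (∑ j, w (i, j)) ^ 2
        + σB * ∑ j, (∑ i, w (i, j)) ^ 2 + σE * ∑ p, w p ^ 2 := by
  have hpt (ω : Ω) : ∑ p, w p * (m + a p.1 ω + b p.2 ω + e p ω)
      = (∑ p, w p) * m + ∑ k, effectWeights w k * Sum.elim a (Sum.elim b e) k ω := by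
    rw [sum_mul_crossed_obs_eq m (a · ω) (b · ω) (e · ω)]
    congr! with ((i | j | p))
  simp_rw [hpt]
  rw [integral_sq_const_add_sum_mul
    (by rintro (i | j | p) <;> simp [h.memLp_a, h.memLp_b, h.memLp_e]) h.indepFun
    (by rintro (i | j | p) <;> simp [h.integral_a, h.integral_b, h.integral_e])]
  simp only [Fintype.sum_sum_type, effectWeights, Sum.elim_inl, Sum.elim_inr, h.integral_sq_a,
    h.integral_sq_b, h.integral_sq_e, ← Finset.sum_mul]
  ring

theorem integral_sq_obs (h : IsCrossedRandomEffects μ a b e σA σB σE) (m : ℝ) (p : α × β) :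
    ∫ ω, (m + a p.1 ω + b p.2 ω + e p ω) ^ 2 ∂μ = m ^ 2 + σA + σB + σE := by
  classical
  obtain ⟨i, j⟩ := p
  simpa [Pi.single_apply, ite_and, apply_ite (· ^ 2)] using
    h.integral_sq_sum_mul m (Pi.single (i, j) 1)

end IsCrossedRandomEffects

end CrossedEffects

theorem stmt_18_general {Ω : Type*} [MeasurableSpace Ω] (μ : Measure Ω) [IsProbabilityMeasure μ]
    (R C : ℕ) (m σA2 σB2 σE2 : ℝ)
    (a : Fin R → Ω → ℝ) (b : Fin C → Ω → ℝ) (e : Fin R → Fin C → Ω → ℝ)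
    (hind : iIndepFun (m := fun _ : (Fin R ⊕ Fin C ⊕ Fin R × Fin C) => inferInstance)
      (Sum.elim a (Sum.elim b (fun p => e p.1 p.2))) μ)
    (ha2 : ∀ i, MemLp (a i) 2 μ) (hb2 : ∀ j, MemLp (b j) 2 μ)
    (he2 : ∀ i j, MemLp (e i j) 2 μ)
    (ham : ∀ i, ∫ ω, a i ω ∂μ = 0) (hbm : ∀ j, ∫ ω, b j ω ∂μ = 0)
    (hem : ∀ i j, ∫ ω, e i j ω ∂μ = 0)
    (hav : ∀ i, ∫ ω, (a i ω) ^ 2 ∂μ = σA2) (hbv : ∀ j, ∫ ω, (b j ω) ^ 2 ∂μ = σB2)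
    (hev : ∀ i j, ∫ ω, (e i j ω) ^ 2 ∂μ = σE2)
    (Z : Matrix (Fin R) (Fin C) ℝ) (hZ01 : ∀ i j, Z i j = 0 ∨ Z i j = 1)
    (Ni : Fin R → ℝ) (hNi : Ni = fun i => ∑ j, Z i j)
    (N : ℝ) (hN : N = ∑ i, ∑ j, Z i j)
    (Nj : Fin C → ℝ) (hNj : Nj = fun j => ∑ i, Z i j)
    (Y : Fin R → Fin C → Ω → ℝ)
    (hY : Y = fun i j ω => m + a i ω + b j ω + e i j ω)
    (UE : Ω → ℝ)
    (hUE : UE = fun ω => N * ∑ i, ∑ j, Z i j *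
      (Y i j ω - N⁻¹ * ∑ i', ∑ j', Z i' j' * Y i' j' ω) ^ 2) :
    ∫ ω, UE ω ∂μ = σA2 * (N ^ 2 - ∑ i, (Ni i) ^ 2) + σB2 * (N ^ 2 - ∑ j, (Nj j) ^ 2)
      + σE2 * (N ^ 2 - N) := by
  have hmodel : IsCrossedRandomEffects μ a b (fun p => e p.1 p.2) σA2 σB2 σE2 :=
    ⟨fun _ _ hkl => hind.indepFun hkl, ha2, hb2, fun p => he2 p.1 p.2, ham, hbm,
      fun p => hem p.1 p.2, hav, hbv, fun p => hev p.1 p.2⟩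
  set w : Fin R × Fin C → ℝ := fun p => Z p.1 p.2
  have hw01 (p : Fin R × Fin C) : w p = 0 ∨ w p = 1 := hZ01 p.1 p.2
  set Yp : Fin R × Fin C → Ω → ℝ := fun p ω => m + a p.1 ω + b p.2 ω + e p.1 p.2 ω
  have hsumw : ∑ p, w p = N := by rw [hN, Fintype.sum_prod_type]
  have hsumw2 : ∑ p, w p ^ 2 = N := by
    rw [← hsumw]
    exact Finset.sum_congr rfl fun p _ => by rcases hw01 p with h | h <;> simp [h]
  have hUE' : UE = fun ω => N * ∑ p, w p * Yp p ω ^ 2 - (∑ p, w p * Yp p ω) ^ 2 := by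
    ext ω
    simp only [hUE, hY, ← hsumw, ← Fintype.sum_prod_type']
    exact mul_sum_mul_sq_sub_weightedMean w (Yp · ω)
      fun p => by rcases hw01 p with h | h <;> simp [h]
  have hA : ∀ p, Integrable (fun ω => w p * Yp p ω ^ 2) μ :=
    fun p => (hmodel.memLp_obs m p).integrable_sq.const_mul _
  have hS : Integrable (fun ω => (∑ p, w p * Yp p ω) ^ 2) μ :=
    (memLp_finsetSum _ fun p _ => (hmodel.memLp_obs m p).const_mul (w p)).integrable_sq
  have hYp : ∀ p, ∫ ω, Yp p ω ^ 2 ∂μ = m ^ 2 + σA2 + σB2 + σE2 := hmodel.integral_sq_obs m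
  rw [hUE', integral_sub ((integrable_finsetSum _ fun p _ => hA p).const_mul N) hS,
    integral_const_mul, integral_finsetSum _ fun p _ => hA p, hmodel.integral_sq_sum_mul]
  simp only [integral_const_mul, hYp, ← Finset.sum_mul, hsumw, hsumw2, hNi, hNj]
  ring

theorem stmt_18 {Ω : Type*} [MeasurableSpace Ω] (μ : Measure Ω) [IsProbabilityMeasure μ]
    (R C : ℕ) (m σA2 σB2 σE2 : ℝ)
    (a : Fin R → Ω → ℝ) (b : Fin C → Ω → ℝ) (e : Fin R → Fin C → Ω → ℝ)
    (hind : iIndepFun (m := fun _ : (Fin R ⊕ Fin C ⊕ Fin R × Fin C) => inferInstance)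
      (Sum.elim a (Sum.elim b (fun p => e p.1 p.2))) μ)
    (ha2 : ∀ i, MemLp (a i) 2 μ) (hb2 : ∀ j, MemLp (b j) 2 μ)
    (he2 : ∀ i j, MemLp (e i j) 2 μ)
    (ham : ∀ i, ∫ ω, a i ω ∂μ = 0) (hbm : ∀ j, ∫ ω, b j ω ∂μ = 0)
    (hem : ∀ i j, ∫ ω, e i j ω ∂μ = 0)
    (hav : ∀ i, ∫ ω, (a i ω) ^ 2 ∂μ = σA2) (hbv : ∀ j, ∫ ω, (b j ω) ^ 2 ∂μ = σB2)
    (hev : ∀ i j, ∫ ω, (e i j ω) ^ 2 ∂μ = σE2)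
    (Z : Matrix (Fin R) (Fin C) ℝ) (hZ01 : ∀ i j, Z i j = 0 ∨ Z i j = 1)
    (Ni : Fin R → ℝ) (hNi : Ni = fun i => ∑ j, Z i j) (hNipos : ∀ i, 0 < Ni i)
    (N : ℝ) (hN : N = ∑ i, ∑ j, Z i j)
    (Nj : Fin C → ℝ) (hNj : Nj = fun j => ∑ i, Z i j)
    (Y : Fin R → Fin C → Ω → ℝ)
    (hY : Y = fun i j ω => m + a i ω + b j ω + e i j ω)
    (UE : Ω → ℝ)
    (hUE : UE = fun ω => N * ∑ i, ∑ j, Z i j *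
      (Y i j ω - N⁻¹ * ∑ i', ∑ j', Z i' j' * Y i' j' ω) ^ 2) :
    ∫ ω, UE ω ∂μ = σA2 * (N ^ 2 - ∑ i, (Ni i) ^ 2) + σB2 * (N ^ 2 - ∑ j, (Nj j) ^ 2)
      + σE2 * (N ^ 2 - N) :=
  stmt_18_general μ R C m σA2 σB2 σE2 a b e hind ha2 hb2 he2 ham hbm hem hav hbv hev Z hZ01 Ni hNi N
    hN Nj hNj Y hY UE hUE
end
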